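/- arXiv:math/0209285 — 7 statements merged into one kernel-verified Lean document; each statement's English description precedes it below -/
import Mathlib

section
/- Let A be a normal (integrally closed) integral domain, I ⊆ A an ideal, a ∈ A a nonzero element, and J = aI. Then: (a) I is integrally closed if and only if J is integrally closed; (b) I is normal if and only if J is normal. -/
/-! If `x` is integral over `aI`, then it is integral over the principal ideal `(a)`, and in a
normal domain this forces `x = a y` with `y ∈ A`: the coefficients of the equation have the
form `a^k b_k`, so `x / a` is a root of `X^m + ∑ b_k X^(m-k)` and hence lies in `A`. Cancelling
`a^m` from the equation shows that `y` is integral over `I`. Thus `x ↦ a x` is a bijection from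
the elements integral over `I` to those integral over `aI`, mapping `I` onto `aI`; applying this
to `a^m` and `I^m`, since `(aI)^m = a^m I^m`, gives the statement on normality. -/

open Finset

/-- `x` is integral over the ideal `I`: it satisfies an equation
`x^m + a₁ x^{m-1} + ⋯ + a_m = 0` with `a_k ∈ I^k`. -/
def IsIntegralOverIdeal {A : Type*} [CommRing A] (I : Ideal A) (x : A) : Prop :=
  ∃ m : ℕ, 0 < m ∧ ∃ a : ℕ → A,
    (∀ k ∈ Finset.Icc 1 m, a k ∈ I ^ k) ∧
    x ^ m + ∑ k ∈ Finset.Icc 1 m, a k * x ^ (m - k) = 0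

/-- An ideal is integrally closed if it contains every element integral over it. -/
def IsIntegrallyClosedIdeal {A : Type*} [CommRing A] (I : Ideal A) : Prop :=
  ∀ x : A, IsIntegralOverIdeal I x → x ∈ I

/-- An ideal is normal if all its positive powers are integrally closed. -/
def IsNormalIdeal {A : Type*} [CommRing A] (I : Ideal A) : Prop :=
  ∀ m : ℕ, 0 < m → IsIntegrallyClosedIdeal (I ^ m)

open Polynomial

section CommRing

variable {R : Type*} [CommRing R]

lemma mul_pow_add_sum_pow_mul_eq (a y : R) (b : ℕ → R) (m : ℕ) :
    (a * y) ^ m + ∑ k ∈ Icc 1 m, a ^ k * b k * (a * y) ^ (m - k) =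
      a ^ m * (y ^ m + ∑ k ∈ Icc 1 m, b k * y ^ (m - k)) := by
  rw [mul_add, mul_sum, mul_pow]
  congr 1
  refine sum_congr rfl fun k hk => ?_
  have hpow : a ^ k * a ^ (m - k) = a ^ m := by
    rw [← pow_add, Nat.add_sub_cancel' (mem_Icc.mp hk).2]
  rw [mul_pow, ← hpow]
  ring

lemma Ideal.mem_span_singleton_mul_pow {a c : R} {I : Ideal R} {k : ℕ} :
    c ∈ (Ideal.span {a} * I) ^ k ↔ ∃ z ∈ I ^ k, a ^ k * z = c := by
  rw [mul_pow, Ideal.span_singleton_pow, Ideal.mem_span_singleton_mul]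

lemma monic_X_pow_add_sum_C_mul_X_pow (b : ℕ → R) (m : ℕ) :
    (X ^ m + ∑ k ∈ Icc 1 m, C (b k) * X ^ (m - k)).Monic := by
  refine monic_X_pow_add ((degree_sum_le _ _).trans_lt ?_)
  refine (Finset.sup_lt_iff (WithBot.bot_lt_coe m)).mpr fun k hk => ?_
  refine (degree_C_mul_X_pow_le _ _).trans_lt ?_
  have := mem_Icc.mp hk
  exact Nat.cast_lt.mpr (by omega)

lemma IsIntegralOverIdeal.mono {I J : Ideal R} (hIJ : I ≤ J) {x : R}
    (hx : IsIntegralOverIdeal I x) : IsIntegralOverIdeal J x := by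
  obtain ⟨m, hm, c, hc, heq⟩ := hx
  exact ⟨m, hm, c, fun k hk => Ideal.pow_right_mono hIJ k (hc k hk), heq⟩

lemma IsIntegralOverIdeal.mul_span_singleton {I : Ideal R} {y : R}
    (hy : IsIntegralOverIdeal I y) (a : R) :
    IsIntegralOverIdeal (Ideal.span {a} * I) (a * y) := by
  obtain ⟨m, hm, b, hb, heq⟩ := hy
  refine ⟨m, hm, fun k => a ^ k * b k, fun k hk => ?_, ?_⟩
  · exact Ideal.mem_span_singleton_mul_pow.mpr ⟨b k, hb k hk, rfl⟩
  · rw [mul_pow_add_sum_pow_mul_eq, heq, mul_zero]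

end CommRing

section IsDomain

variable {R : Type*} [CommRing R] [IsDomain R]

lemma isIntegralOverIdeal_span_singleton_mul_mul_iff {I : Ideal R} {a : R} (ha : a ≠ 0)
    (y : R) : IsIntegralOverIdeal (Ideal.span {a} * I) (a * y) ↔ IsIntegralOverIdeal I y := by
  refine ⟨fun ⟨m, hm, c, hc, heq⟩ => ?_, fun hy => hy.mul_span_singleton a⟩
  choose! b hbI hbc using fun k hk => Ideal.mem_span_singleton_mul_pow.mp (hc k hk)
  refine ⟨m, hm, b, hbI, ?_⟩
  have hscaled : a ^ m * (y ^ m + ∑ k ∈ Icc 1 m, b k * y ^ (m - k)) = 0 := by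
    rw [← mul_pow_add_sum_pow_mul_eq, ← heq]
    congr 1
    exact sum_congr rfl fun k hk => by rw [hbc k hk]
  exact (mul_eq_zero.mp hscaled).resolve_left (pow_ne_zero m ha)

lemma Ideal.mul_mem_span_singleton_mul_iff {I : Ideal R} {a : R} (ha : a ≠ 0) (y : R) :
    a * y ∈ Ideal.span {a} * I ↔ y ∈ I := by
  rw [Ideal.mem_span_singleton_mul]
  exact ⟨fun ⟨z, hz, hzy⟩ => mul_left_cancel₀ ha hzy ▸ hz, fun hy => ⟨y, hy, rfl⟩⟩

lemma IsIntegrallyClosed.dvd_of_pow_add_sum_eq_zero [IsIntegrallyClosed R] {a x : R}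
    (ha : a ≠ 0) (b : ℕ → R) (m : ℕ)
    (heq : x ^ m + ∑ k ∈ Icc 1 m, a ^ k * b k * x ^ (m - k) = 0) : a ∣ x := by
  set f := algebraMap R (FractionRing R)
  have hfa : f a ≠ 0 := (map_ne_zero_iff f (IsFractionRing.injective R _)).mpr ha
  have hfx : f a * (f x / f a) = f x := mul_div_cancel₀ _ hfa
  have hroot : aeval (f x / f a) (X ^ m + ∑ k ∈ Icc 1 m, C (b k) * X ^ (m - k)) = 0 := by
    have hscaled := congrArg f heq
    simp only [map_add, map_sum, map_mul, map_pow, map_zero] at hscaled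
    rw [← hfx, mul_pow_add_sum_pow_mul_eq] at hscaled
    simpa [pow_ne_zero m hfa] using hscaled
  obtain ⟨y, hy⟩ := IsIntegrallyClosed.isIntegral_iff.mp
    ⟨_, monic_X_pow_add_sum_C_mul_X_pow b m, hroot⟩
  refine ⟨y, IsFractionRing.injective R (FractionRing R) ?_⟩
  rw [map_mul, hy, hfx]

lemma isIntegrallyClosedIdeal_span_singleton [IsIntegrallyClosed R] {a : R} (ha : a ≠ 0) :
    IsIntegrallyClosedIdeal (Ideal.span {a}) := by
  intro x ⟨m, _, c, hc, heq⟩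
  choose! b hbc using fun k hk => by
    simpa only [Ideal.span_singleton_pow, Ideal.mem_span_singleton] using hc k hk
  refine Ideal.mem_span_singleton.mpr (IsIntegrallyClosed.dvd_of_pow_add_sum_eq_zero ha b m ?_)
  rw [← heq]
  congr 1
  exact sum_congr rfl fun k hk => by rw [← hbc k hk]

lemma isIntegrallyClosedIdeal_span_singleton_mul_iff [IsIntegrallyClosed R] (I : Ideal R)
    {a : R} (ha : a ≠ 0) :
    IsIntegrallyClosedIdeal (Ideal.span {a} * I) ↔ IsIntegrallyClosedIdeal I := by
  constructor
  · intro hJ y hy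
    exact (Ideal.mul_mem_span_singleton_mul_iff ha y).mp (hJ _ (hy.mul_span_singleton a))
  · intro hI x hx
    obtain ⟨y, rfl⟩ := Ideal.mem_span_singleton.mp <| isIntegrallyClosedIdeal_span_singleton ha x
      (hx.mono Ideal.mul_le_left)
    rw [isIntegralOverIdeal_span_singleton_mul_mul_iff ha] at hx
    exact (Ideal.mul_mem_span_singleton_mul_iff ha y).mpr (hI y hx)

end IsDomain

theorem stmt3 {A : Type*} [CommRing A] [IsDomain A] [IsIntegrallyClosed A]
    (I : Ideal A) (a : A) (ha : a ≠ 0) (J : Ideal A) (hJ : J = Ideal.span {a} * I) :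
    (IsIntegrallyClosedIdeal I ↔ IsIntegrallyClosedIdeal J) ∧
    (IsNormalIdeal I ↔ IsNormalIdeal J) := by
  subst hJ
  refine ⟨(isIntegrallyClosedIdeal_span_singleton_mul_iff I ha).symm,
    forall₂_congr fun m _ => ?_⟩
  rw [mul_pow, Ideal.span_singleton_pow]
  exact (isIntegrallyClosedIdeal_span_singleton_mul_iff (I ^ m) (pow_ne_zero m ha)).symm
end

section
/- Let A be an ℕ-graded ring generated over A₀ by homogeneous elements x₁,…,xₙ of positive degrees ω₁,…,ωₙ, let w = lcm(ω₁,…,ωₙ), let k be a positive integer, and let I = A_{≥kw}. If I^p = A_{≥pkw} for every integer p with 1 ≤ p ≤ (n−2)/k + 1, then I^p = A_{≥pkw} for all integers p ≥ 1. In particular, if k ≥ n−1 then I^p = A_{≥pkw} for all p ≥ 1. -/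
open Finset

/-- For an ℕ-graded ring `A` (graded by `𝒜`), the homogeneous ideal
`A_{≥ m} = ⊕_{ℓ ≥ m} A_ℓ`, realized as the ideal generated by all homogeneous
elements of degree at least `m`. -/
def idealGe {A : Type*} [CommRing A] (𝒜 : ℕ → AddSubgroup A) (m : ℕ) : Ideal A :=
  Ideal.span {a : A | ∃ ℓ : ℕ, m ≤ ℓ ∧ a ∈ 𝒜 ℓ}

section Aux

variable {A : Type*} [CommRing A] (𝒜 : ℕ → AddSubgroup A) [GradedRing 𝒜]

lemma idealGe_mem {m ℓ : ℕ} (h : m ≤ ℓ) {a : A} (ha : a ∈ 𝒜 ℓ) : a ∈ idealGe 𝒜 m :=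
  Ideal.subset_span ⟨ℓ, h, ha⟩

lemma idealGe_mul_le (a b : ℕ) : idealGe 𝒜 a * idealGe 𝒜 b ≤ idealGe 𝒜 (a + b) := by
  rw [idealGe, idealGe, Ideal.span_mul_span']
  rw [idealGe, Ideal.span_le]
  rintro z hz
  rw [Set.mem_mul] at hz
  obtain ⟨s, hs, t, ht, rfl⟩ := hz
  obtain ⟨ℓ₁, h1, hs⟩ := hs
  obtain ⟨ℓ₂, h2, ht⟩ := ht
  exact Ideal.subset_span ⟨ℓ₁ + ℓ₂, add_le_add h1 h2, SetLike.mul_mem_graded hs ht⟩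

/-- From a family `q` with `k ≤ ∑ q i` one can choose `c ≤ q` with `∑ c i = k`. -/
lemma chooseC {n : ℕ} (k : ℕ) (q : Fin n → ℕ) (hk : k ≤ ∑ i, q i) :
    ∃ c : Fin n → ℕ, (∀ i, c i ≤ q i) ∧ ∑ i, c i = k := by
  induction k with
  | zero => exact ⟨fun _ => 0, fun i => Nat.zero_le _, by simp⟩
  | succ k ih =>
    obtain ⟨c, hc1, hc2⟩ := ih (by omega)
    have hlt : ∑ i, c i < ∑ i, q i := by omega
    have : ∃ i, c i < q i := by
      by_contra h
      push_neg at h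
      have h2 : ∑ i, q i ≤ ∑ i, c i := Finset.sum_le_sum (fun i _ => h i)
      omega
    obtain ⟨i, hi⟩ := this
    classical
    refine ⟨Function.update c i (c i + 1), ?_, ?_⟩
    · intro j
      rcases eq_or_ne j i with rfl | hj
      · rw [Function.update_self]; omega
      · rw [Function.update_of_ne hj]; exact hc1 j
    · rw [Finset.sum_update_of_mem (Finset.mem_univ i)]
      have := Finset.add_sum_erase Finset.univ c (Finset.mem_univ i)
      rw [← Finset.sdiff_singleton_eq_erase] at this
      omega

end Aux

theorem stmt4 {A : Type*} [CommRing A] (𝒜 : ℕ → AddSubgroup A) [GradedRing 𝒜]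
    {n : ℕ} (x : Fin n → A) (ω : Fin n → ℕ) (hω : ∀ i, 0 < ω i)
    (hx : ∀ i, x i ∈ 𝒜 (ω i))
    (hgen : Subring.closure ((𝒜 0 : Set A) ∪ Set.range x) = ⊤)
    (k : ℕ) (hk : 0 < k) (w : ℕ) (hw : w = Finset.univ.lcm ω)
    (I : Ideal A) (hI : I = idealGe 𝒜 (k * w)) :
    ((∀ p : ℕ, 1 ≤ p → (p : ℚ) ≤ ((n : ℚ) - 2) / (k : ℚ) + 1 →
        I ^ p = idealGe 𝒜 (p * k * w)) →
      ∀ p : ℕ, 1 ≤ p → I ^ p = idealGe 𝒜 (p * k * w)) ∧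
    (n - 1 ≤ k → ∀ p : ℕ, 1 ≤ p → I ^ p = idealGe 𝒜 (p * k * w)) := by
  classical
  subst hI
  -- basic positivity facts
  have hwpos : 0 < w := by
    rw [hw]
    rcases Nat.eq_zero_or_pos (Finset.univ.lcm ω) with h | h
    · exfalso
      rw [Finset.lcm_eq_zero_iff] at h
      obtain ⟨i, -, hi⟩ := h
      exact (hω i).ne' hi
    · exact h
  have hdvd : ∀ i, ω i ∣ w := fun i => hw ▸ Finset.dvd_lcm (Finset.mem_univ i)
  set u : Fin n → ℕ := fun i => w / ω i with hu_def
  have hu : ∀ i, u i * ω i = w := fun i => Nat.div_mul_cancel (hdvd i)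
  have hupos : ∀ i, 0 < u i := by
    intro i
    rcases Nat.eq_zero_or_pos (u i) with h | h
    · exfalso; have := hu i; rw [h] at this; simp at this; omega
    · exact h
  -- the set of "monomials"
  set T : Set A := {z | ∃ a₀ : A, ∃ m : Fin n → ℕ, a₀ ∈ 𝒜 0 ∧ z = a₀ * ∏ i, x i ^ m i}
    with hT_def
  have hTmul : ∀ z₁ ∈ T, ∀ z₂ ∈ T, z₁ * z₂ ∈ T := by
    rintro _ ⟨a₀, m, ha, rfl⟩ _ ⟨b₀, m', hb, rfl⟩
    refine ⟨a₀ * b₀, m + m', ?_, ?_⟩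
    · simpa using SetLike.mul_mem_graded ha hb
    · simp only [Pi.add_apply, pow_add, Finset.prod_mul_distrib]
      ring
  have hclosed : ∀ z₁ ∈ AddSubgroup.closure T, ∀ z₂ ∈ AddSubgroup.closure T,
      z₁ * z₂ ∈ AddSubgroup.closure T := by
    intro z₁ h₁
    refine AddSubgroup.closure_induction ?_ ?_ ?_ ?_ h₁
    · intro a ha z₂ h₂
      refine AddSubgroup.closure_induction ?_ ?_ ?_ ?_ h₂
      · intro b hb; exact AddSubgroup.subset_closure (hTmul a ha b hb)
      · rw [mul_zero]; exact zero_mem _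
      · intro b c _ _ hb hc; rw [mul_add]; exact add_mem hb hc
      · intro b _ hb; rw [mul_neg]; exact neg_mem hb
    · intro z₂ _; rw [zero_mul]; exact zero_mem _
    · intro a b _ _ ha hb z₂ h₂; rw [add_mul]; exact add_mem (ha z₂ h₂) (hb z₂ h₂)
    · intro a _ ha z₂ h₂; rw [neg_mul]; exact neg_mem (ha z₂ h₂)
  have hT1 : ∀ z : A, z ∈ AddSubgroup.closure T := by
    intro z
    have hz : z ∈ Subring.closure ((𝒜 0 : Set A) ∪ Set.range x) := by
      rw [hgen]; trivial
    refine Subring.closure_induction ?_ ?_ ?_ ?_ ?_ ?_ hz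
    · intro y hy
      rcases hy with hy | hy
      · exact AddSubgroup.subset_closure ⟨y, 0, hy, by simp⟩
      · obtain ⟨j, rfl⟩ := hy
        refine AddSubgroup.subset_closure ⟨1, Pi.single j 1, SetLike.one_mem_graded 𝒜, ?_⟩
        rw [one_mul]
        rw [Finset.prod_eq_single j]
        · simp
        · intro b _ hb; simp [Pi.single_apply, hb]
        · intro h; exact absurd (Finset.mem_univ j) h
    · exact zero_mem _
    · exact AddSubgroup.subset_closure ⟨1, 0, SetLike.one_mem_graded 𝒜, by simp⟩
    · intro a b _ _ ha hb; exact add_mem ha hb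
    · intro a _ ha; exact neg_mem ha
    · intro a b _ _ ha hb; exact hclosed a ha b hb
  -- degree of a monomial
  have hmonodeg : ∀ (a₀ : A) (m : Fin n → ℕ), a₀ ∈ 𝒜 0 →
      a₀ * ∏ i, x i ^ m i ∈ 𝒜 (∑ i, m i * ω i) := by
    intro a₀ m ha
    have h2 := SetLike.prod_pow_mem_graded 𝒜 ω x (F := Finset.univ) m (fun i _ => hx i)
    have h3 := SetLike.mul_mem_graded ha h2
    simpa [smul_eq_mul] using h3
  -- the inductive step
  have step : ∀ P : ℕ, n - 1 ≤ (P + 1) * k →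
      idealGe 𝒜 (k * w) ^ (P + 1) = idealGe 𝒜 ((P + 1) * k * w) →
      idealGe 𝒜 (k * w) ^ (P + 2) = idealGe 𝒜 ((P + 2) * k * w) := by
    intro P hnk prev
    apply le_antisymm
    · calc idealGe 𝒜 (k * w) ^ (P + 2)
          = idealGe 𝒜 (k * w) ^ (P + 1) * idealGe 𝒜 (k * w) := pow_succ _ _
        _ = idealGe 𝒜 ((P + 1) * k * w) * idealGe 𝒜 (k * w) := by rw [prev]
        _ ≤ idealGe 𝒜 ((P + 1) * k * w + k * w) := idealGe_mul_le 𝒜 _ _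
        _ = idealGe 𝒜 ((P + 2) * k * w) := by ring_nf
    · -- hard direction
      have key : ∀ (a₀ : A) (m : Fin n → ℕ), a₀ ∈ 𝒜 0 →
          (P + 2) * k * w ≤ ∑ i, m i * ω i →
          a₀ * ∏ i, x i ^ m i ∈ idealGe 𝒜 (k * w) ^ (P + 2) := by
        intro a₀ m ha hd
        have hQ : k ≤ ∑ i, m i / u i := by
          by_cases hn0 : n = 0
          · exfalso
            have hsum0 : ∑ i, m i * ω i = 0 := by
              subst hn0; simp
            have hpos : 0 < (P + 2) * k * w := by positivity
            rw [hsum0] at hd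
            exact Nat.lt_irrefl 0 (lt_of_lt_of_le hpos hd)
          · by_contra hQ'
            push_neg at hQ'
            have hbound : ∀ i : Fin n, m i * ω i + ω i ≤ (m i / u i) * w + w := by
              intro i
              have h1 : m i + 1 ≤ u i * (m i / u i) + u i := by
                have h2 := Nat.div_add_mod (m i) (u i)
                have h3 := Nat.mod_lt (m i) (hupos i)
                omega
              calc m i * ω i + ω i = (m i + 1) * ω i := by ring
                _ ≤ (u i * (m i / u i) + u i) * ω i := Nat.mul_le_mul_right _ h1
                _ = (m i / u i) * (u i * ω i) + u i * ω i := by ring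
                _ = (m i / u i) * w + w := by rw [hu i]
            have hsum := Finset.sum_le_sum (fun i (_ : i ∈ Finset.univ) => hbound i)
            rw [Finset.sum_add_distrib, Finset.sum_add_distrib, ← Finset.sum_mul,
              Finset.sum_const, Finset.card_univ, Fintype.card_fin, smul_eq_mul] at hsum
            set S := ∑ i, m i / u i with hS_def
            have hωs : n ≤ ∑ i, ω i := by
              calc n = ∑ _i : Fin n, 1 := by simp
                _ ≤ ∑ i, ω i := Finset.sum_le_sum (fun i _ => hω i)
            have f2 : (S + 1) * w ≤ k * w := Nat.mul_le_mul_right _ (by omega)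
            have f2' : (S + 1) * w = S * w + w := by ring
            have f3a : (n - 1) * w ≤ (P + 1) * k * w :=
              Nat.mul_le_mul_right _ hnk
            have f3b : (P + 1) * k * w + k * w = (P + 2) * k * w := by ring
            have f5 : n * w ≤ ((n - 1) + 1) * w := Nat.mul_le_mul_right _ (by omega)
            have f5' : ((n - 1) + 1) * w = (n - 1) * w + w := by ring
            have hn1 : 1 ≤ n := by omega
            -- linear arithmetic over the atoms
            linarith [hsum, hωs, f2, f2', f3a, f3b, f5, f5', hd, hwpos]
        obtain ⟨c, hcle, hcsum⟩ := chooseC k (fun i => m i / u i) hQ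
        have hcu : ∀ i, c i * u i ≤ m i := fun i =>
          le_trans (Nat.mul_le_mul_right _ (hcle i)) (Nat.div_mul_le_self _ _)
        have hsum_cu : ∑ i, c i * u i * ω i = k * w := by
          calc ∑ i, c i * u i * ω i = ∑ i, c i * w := by
                refine Finset.sum_congr rfl fun i _ => ?_
                rw [mul_assoc, hu i]
            _ = (∑ i, c i) * w := (Finset.sum_mul _ _ _).symm
            _ = k * w := by rw [hcsum]
        have hy : (∏ i, x i ^ (c i * u i)) ∈ 𝒜 (k * w) := by
          have h2 := SetLike.prod_pow_mem_graded 𝒜 ω x (F := Finset.univ)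
            (fun i => c i * u i) (fun i _ => hx i)
          have he : ∑ i, (c i * u i) • ω i = k * w := by
            simpa [smul_eq_mul] using hsum_cu
          rw [he] at h2
          exact h2
        have hz : a₀ * ∏ i, x i ^ (m i - c i * u i) ∈ idealGe 𝒜 ((P + 1) * k * w) := by
          refine idealGe_mem 𝒜 (ℓ := ∑ i, (m i - c i * u i) * ω i) ?_ (hmonodeg a₀ _ ha)
          have e1 : ∑ i, (m i - c i * u i) * ω i
              = ∑ i, m i * ω i - ∑ i, c i * u i * ω i := by
            rw [← Finset.sum_tsub_distrib Finset.univ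
              (fun i _ => Nat.mul_le_mul_right (ω i) (hcu i))]
            exact Finset.sum_congr rfl fun i _ => by rw [Nat.sub_mul]
          rw [e1, hsum_cu]
          have f3b : (P + 1) * k * w + k * w = (P + 2) * k * w := by ring
          exact Nat.le_sub_of_add_le (by rw [f3b]; exact hd)
        have hfactor : a₀ * ∏ i, x i ^ m i
            = (a₀ * ∏ i, x i ^ (m i - c i * u i)) * ∏ i, x i ^ (c i * u i) := by
          rw [mul_assoc, ← Finset.prod_mul_distrib]
          congr 1
          refine Finset.prod_congr rfl fun i _ => ?_
          rw [← pow_add]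
          congr 1
          exact (Nat.sub_add_cancel (hcu i)).symm
        rw [hfactor, show P + 2 = (P + 1) + 1 from rfl, pow_succ]
        exact Ideal.mul_mem_mul (prev ▸ hz) (idealGe_mem 𝒜 le_rfl hy)
      rw [idealGe, Ideal.span_le]
      rintro a ⟨ℓ, hℓ, ha⟩
      have hproj : GradedRing.proj 𝒜 ℓ a = a := by
        rw [GradedRing.proj_apply, DirectSum.decompose_of_mem_same 𝒜 ha]
      have h1 : a ∈ AddSubgroup.map (GradedRing.proj 𝒜 ℓ) (AddSubgroup.closure T) :=
        ⟨a, hT1 a, hproj⟩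
      rw [AddMonoidHom.map_closure] at h1
      have h2 : AddSubgroup.closure ((GradedRing.proj 𝒜 ℓ) '' T)
          ≤ (idealGe 𝒜 (k * w) ^ (P + 2)).toAddSubgroup := by
        rw [AddSubgroup.closure_le]
        rintro _ ⟨t, ⟨a₀, m, ha₀, rfl⟩, rfl⟩
        by_cases hdeg : (∑ i, m i * ω i) = ℓ
        · have heq : GradedRing.proj 𝒜 ℓ (a₀ * ∏ i, x i ^ m i) = a₀ * ∏ i, x i ^ m i := by
            rw [GradedRing.proj_apply,
              DirectSum.decompose_of_mem_same 𝒜 (hdeg ▸ hmonodeg a₀ m ha₀)]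
          simp only [SetLike.mem_coe, heq]
          exact key a₀ m ha₀ (by rw [hdeg]; exact hℓ)
        · have heq : GradedRing.proj 𝒜 ℓ (a₀ * ∏ i, x i ^ m i) = 0 := by
            rw [GradedRing.proj_apply,
              DirectSum.decompose_of_mem_ne 𝒜 (hmonodeg a₀ m ha₀) hdeg]
          simp only [SetLike.mem_coe, heq]
          exact zero_mem _
      exact h2 h1
  have base : idealGe 𝒜 (k * w) ^ 1 = idealGe 𝒜 (1 * k * w) := by
    rw [pow_one, one_mul]
  constructor
  · intro hyp p hp
    induction p, hp using Nat.le_induction with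
    | base => exact base
    | succ p hp ih =>
      obtain ⟨P, rfl⟩ : ∃ P, p = P + 1 := ⟨p - 1, by omega⟩
      by_cases hc : ((P + 2 : ℕ) : ℚ) ≤ ((n : ℚ) - 2) / (k : ℚ) + 1
      · exact hyp (P + 2) (by omega) hc
      · push_neg at hc
        have hk' : (0 : ℚ) < (k : ℚ) := by exact_mod_cast hk
        have h3 : ((n : ℚ) - 2) / (k : ℚ) < ((P + 1 : ℕ) : ℚ) := by
          push_cast at hc ⊢; linarith
        have h4 : (n : ℚ) - 2 < (((P + 1) * k : ℕ) : ℚ) := by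
          rw [div_lt_iff₀ hk'] at h3
          push_cast at h3 ⊢
          linarith
        have h5 : n < (P + 1) * k + 2 := by
          have h4' : ((n : ℕ) : ℚ) < (((P + 1) * k + 2 : ℕ) : ℚ) := by push_cast; push_cast at h4; linarith
          exact_mod_cast h4'
        exact step P (by omega) ih
  · intro hkn p hp
    induction p, hp using Nat.le_induction with
    | base => exact base
    | succ p hp ih =>
      obtain ⟨P, rfl⟩ : ∃ P, p = P + 1 := ⟨p - 1, by omega⟩
      have : k ≤ (P + 1) * k := Nat.le_mul_of_pos_left k (Nat.succ_pos P)
      exact step P (by omega) ih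
end

section
/- Let A be a reduced ℕ-graded commutative ring and let d be a positive integer. Then the ideal I = A_{≥d} is integrally closed in A. -/
open Finset

section Aux

variable {A : Type*} [CommRing A] (𝒜 : ℕ → AddSubgroup A) [GradedRing 𝒜]

lemma proj_mul (a b : A) (n : ℕ) :
    GradedRing.proj 𝒜 n (a * b) =
      ∑ ij ∈ Finset.HasAntidiagonal.antidiagonal n, GradedRing.proj 𝒜 ij.1 a * GradedRing.proj 𝒜 ij.2 b := by
  classical
  simp only [GradedRing.proj_apply, DirectSum.decompose_mul]
  rw [DirectSum.coe_mul_apply]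
  refine Finset.sum_subset ?_ ?_
  · intro ij hij
    rw [Finset.mem_filter] at hij
    exact Finset.HasAntidiagonal.mem_antidiagonal.mpr hij.2
  · intro ij hij hij2
    rw [Finset.mem_filter, Finset.mem_product] at hij2
    have h := Finset.HasAntidiagonal.mem_antidiagonal.mp hij
    rcases not_and_or.mp (fun hh => hij2 ⟨hh, h⟩) with h1 | h1 <;>
      simp [DFinsupp.notMem_support_iff.mp h1]

lemma mem_idealGe_iff (m : ℕ) (x : A) :
    x ∈ idealGe 𝒜 m ↔ ∀ ℓ < m, GradedRing.proj 𝒜 ℓ x = 0 := by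
  classical
  constructor
  · intro hx
    refine Submodule.span_induction ?_ ?_ ?_ ?_ hx
    · rintro a ⟨ℓ₀, hℓ₀, ha⟩ ℓ hℓ
      rw [GradedRing.proj_apply, DirectSum.decompose_of_mem_ne 𝒜 ha (by omega)]
    · intro ℓ _; simp
    · intro a b _ _ ha hb ℓ hℓ
      rw [map_add, ha ℓ hℓ, hb ℓ hℓ, add_zero]
    · intro a b _ hb ℓ hℓ
      rw [smul_eq_mul, proj_mul]
      refine Finset.sum_eq_zero fun ij hij => ?_
      rw [hb ij.2 (by have := Finset.HasAntidiagonal.mem_antidiagonal.mp hij; omega), mul_zero]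
  · intro h
    rw [← DirectSum.sum_support_decompose 𝒜 x]
    refine Ideal.sum_mem _ fun ℓ hℓ => ?_
    by_cases hℓm : m ≤ ℓ
    · exact Ideal.subset_span ⟨ℓ, hℓm, SetLike.coe_mem _⟩
    · rw [← GradedRing.proj_apply, h ℓ (by omega)]
      exact Ideal.zero_mem _

lemma idealGe_mul (m n : ℕ) : idealGe 𝒜 m * idealGe 𝒜 n ≤ idealGe 𝒜 (m + n) := by
  rw [Ideal.mul_le]
  intro a ha b hb
  rw [mem_idealGe_iff] at ha hb ⊢
  intro ℓ hℓ
  rw [proj_mul]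
  refine Finset.sum_eq_zero fun ij hij => ?_
  have := Finset.HasAntidiagonal.mem_antidiagonal.mp hij
  by_cases h1 : ij.1 < m
  · rw [ha ij.1 h1, zero_mul]
  · rw [hb ij.2 (by omega), mul_zero]

lemma idealGe_pow (m k : ℕ) : idealGe 𝒜 m ^ k ≤ idealGe 𝒜 (k * m) := by
  induction k with
  | zero => intro x _; rw [mem_idealGe_iff]; omega
  | succ k ih =>
    rw [pow_succ]
    calc idealGe 𝒜 m ^ k * idealGe 𝒜 m ≤ idealGe 𝒜 (k * m) * idealGe 𝒜 m :=
          Ideal.mul_mono_left ih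
      _ ≤ idealGe 𝒜 (k * m + m) := idealGe_mul 𝒜 _ _
      _ = idealGe 𝒜 ((k + 1) * m) := by ring_nf

lemma proj_pow_low (x : A) (c : ℕ) (hx : ∀ ℓ < c, GradedRing.proj 𝒜 ℓ x = 0) (m : ℕ) :
    (∀ ℓ < m * c, GradedRing.proj 𝒜 ℓ (x ^ m) = 0) ∧
      GradedRing.proj 𝒜 (m * c) (x ^ m) = (GradedRing.proj 𝒜 c x) ^ m := by
  induction m with
  | zero =>
    refine ⟨by omega, ?_⟩
    simp only [pow_zero, Nat.zero_mul]
    rw [GradedRing.proj_apply, DirectSum.decompose_of_mem_same 𝒜 (SetLike.one_mem_graded 𝒜)]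
  | succ m ih =>
    obtain ⟨ih1, ih2⟩ := ih
    have hmc : (m + 1) * c = m * c + c := by ring
    constructor
    · intro ℓ hℓ
      rw [hmc] at hℓ
      rw [pow_succ, proj_mul]
      refine Finset.sum_eq_zero fun ij hij => ?_
      have hsum := Finset.HasAntidiagonal.mem_antidiagonal.mp hij
      by_cases h2 : ij.2 < c
      · rw [hx ij.2 h2, mul_zero]
      · rw [ih1 ij.1 (by omega), zero_mul]
    · rw [pow_succ, proj_mul]
      rw [Finset.sum_eq_single (m * c, c)]
      · rw [ih2, ← pow_succ]
      · intro ij hij hne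
        have hsum := Finset.HasAntidiagonal.mem_antidiagonal.mp hij
        rw [hmc] at hsum
        by_cases h2 : ij.2 < c
        · rw [hx ij.2 h2, mul_zero]
        · rcases lt_or_eq_of_le (not_lt.mp h2) with h | h
          · rw [ih1 ij.1 (by omega), zero_mul]
          · exact absurd (Prod.ext (by omega) h.symm) hne
      · intro h
        exact absurd (Finset.HasAntidiagonal.mem_antidiagonal.mpr (by omega)) h

end Aux

theorem stmt5 {A : Type*} [CommRing A] [IsReduced A]
    (𝒜 : ℕ → AddSubgroup A) [GradedRing 𝒜] (d : ℕ) (hd : 0 < d) :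
    IsIntegrallyClosedIdeal (idealGe 𝒜 d) := by
  classical
  rintro x ⟨m, hm, a, ha, heq⟩
  by_contra hx
  rw [mem_idealGe_iff] at hx
  push_neg at hx
  have hex : ∃ ℓ, ℓ < d ∧ GradedRing.proj 𝒜 ℓ x ≠ 0 := hx
  set c := Nat.find hex with hc
  obtain ⟨hcd, hcne⟩ := Nat.find_spec hex
  have hlow : ∀ ℓ < c, GradedRing.proj 𝒜 ℓ x = 0 := by
    intro ℓ hℓ
    have := Nat.find_min hex hℓ
    push_neg at this
    exact this (by omega)
  -- apply proj (m * c) to the integral equation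
  have h0 : GradedRing.proj 𝒜 (m * c) (x ^ m + ∑ k ∈ Finset.Icc 1 m, a k * x ^ (m - k)) = 0 := by
    rw [heq, map_zero]
  rw [map_add, (proj_pow_low 𝒜 x c hlow m).2, map_sum] at h0
  have hterms : ∀ k ∈ Finset.Icc 1 m, GradedRing.proj 𝒜 (m * c) (a k * x ^ (m - k)) = 0 := by
    intro k hk
    obtain ⟨hk1, hk2⟩ := Finset.mem_Icc.mp hk
    have hak : a k ∈ idealGe 𝒜 (k * d) := idealGe_pow 𝒜 d k (ha k hk)
    rw [mem_idealGe_iff] at hak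
    rw [proj_mul]
    refine Finset.sum_eq_zero fun ij hij => ?_
    have hsum := Finset.HasAntidiagonal.mem_antidiagonal.mp hij
    by_cases h1 : ij.1 < k * d
    · rw [hak ij.1 h1, zero_mul]
    · have h2 : ij.2 < (m - k) * c := by
        have hkd : k * c < k * d := by
          exact Nat.mul_lt_mul_of_le_of_lt (le_refl k) hcd (by omega)
        have : (m - k) * c + k * c = m * c := by
          rw [← Nat.add_mul]; congr 1; omega
        omega
      rw [(proj_pow_low 𝒜 x c hlow (m - k)).1 ij.2 h2, mul_zero]
  rw [Finset.sum_eq_zero hterms, add_zero] at h0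
  exact hcne (IsReduced.eq_zero _ ⟨m, h0⟩)
end

section
/- With Γ = Γ(I(λ)) the exponent set of I(λ), one has Γ = {α ∈ ℕⁿ | a₁/λ₁ + ⋯ + aₙ/λₙ ≥ 1} = {α ∈ ℕⁿ | ω₁a₁ + ⋯ + ωₙaₙ ≥ L}, where α = (a₁,…,aₙ). -/
open Finset

/-- The ideal `J(λ) = (x₁^{λ₁}, …, xₙ^{λₙ})` in `K[x₁,…,xₙ]`. -/
noncomputable def Jlam (K : Type*) [Field K] {n : ℕ} (lam : Fin n → ℕ) : Ideal (MvPolynomial (Fin n) K) :=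
  Ideal.span (Set.range fun i => MvPolynomial.X i ^ lam i)

/-- The ideal `I(λ)`, the integral closure of `J(λ)` in `K[x₁,…,xₙ]`:
the ideal consisting of all elements integral over `J(λ)`. -/
noncomputable def Ilam (K : Type*) [Field K] {n : ℕ} (lam : Fin n → ℕ) : Ideal (MvPolynomial (Fin n) K) :=
  Ideal.span {x | IsIntegralOverIdeal (Jlam K lam) x}

section Aux

open PowerSeries

lemma ps_order_neg {K : Type*} [Field K] (f : PowerSeries K) : (-f).order = f.order := by
  rw [neg_eq_neg_one_mul, order_mul,
    order_zero_of_unit (isUnit_one.neg : IsUnit (-1 : PowerSeries K)), zero_add]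

lemma ps_le_order_sum {K : Type*} [Field K] {ι : Type*} (s : Finset ι) (f : ι → PowerSeries K)
    (N : ℕ∞) (h : ∀ i ∈ s, N ≤ (f i).order) : N ≤ (∑ i ∈ s, f i).order := by
  classical
  induction s using Finset.induction with
  | empty => simp [order_zero]
  | @insert a s' hx ih =>
    rw [Finset.sum_insert hx]
    refine le_trans ?_ (min_order_le_order_add _ _)
    exact le_min (h a (Finset.mem_insert_self a s'))
      (ih fun i hi => h i (Finset.mem_insert_of_mem hi))

lemma ps_order_pow {K : Type*} [Field K] (y : PowerSeries K) (j : ℕ) :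
    (y ^ j).order = j • y.order := by
  induction j with
  | zero => simp [order_one]
  | succ j ih => rw [pow_succ, order_mul, ih, succ_nsmul]

lemma ps_key {K : Type*} [Field K] (L : ℕ) (y : PowerSeries K)
    (m : ℕ) (a : ℕ → PowerSeries K)
    (ha : ∀ k ∈ Finset.Icc 1 m, a k ∈ Ideal.span {(X : PowerSeries K) ^ L} ^ k)
    (heq : y ^ m + ∑ k ∈ Finset.Icc 1 m, a k * y ^ (m - k) = 0) :
    (X : PowerSeries K) ^ L ∣ y := by
  by_contra hdvd
  have horder : y.order < (L : ℕ∞) := by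
    by_contra h
    push_neg at h
    exact hdvd (by
      rcases eq_or_ne y 0 with rfl | hy
      · exact dvd_zero _
      · have hfin : y.order < ⊤ := order_finite_iff_ne_zero.mpr hy
        have := X_pow_order_dvd (φ := y)
        refine dvd_trans (pow_dvd_pow _ ?_) this
        have : (L : ℕ∞) ≤ (y.order.lift hfin : ℕ∞) := by
          rwa [ENat.coe_lift]
        rw [ENat.lift_eq_toNat_of_lt_top hfin] at this
        exact_mod_cast this)
  have hy : y ≠ 0 := by
    intro h; rw [h, order_zero] at horder; exact (not_top_lt horder)
  have hfin : y.order < ⊤ := order_finite_iff_ne_zero.mpr hy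
  set d : ℕ := y.order.lift hfin with hd
  have hdo : y.order = (d : ℕ∞) := (ENat.coe_lift _ _).symm
  have hdL : d < L := by rw [hdo] at horder; exact_mod_cast horder
  have hypow : (y ^ m).order = ((m * d : ℕ) : ℕ∞) := by
    rw [ps_order_pow, hdo]
    simp only [nsmul_eq_mul]
    push_cast
    ring
  have hsum : ((m * d + 1 : ℕ) : ℕ∞) ≤ (∑ k ∈ Finset.Icc 1 m, a k * y ^ (m - k)).order := by
    apply ps_le_order_sum
    intro k hk
    obtain ⟨hk1, hkm⟩ := Finset.mem_Icc.mp hk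
    rw [order_mul]
    have h1 : ((k * L : ℕ) : ℕ∞) ≤ (a k).order := by
      have := ha k hk
      rw [Ideal.span_singleton_pow, ← pow_mul, Ideal.mem_span_singleton] at this
      obtain ⟨c, hc⟩ := this
      rw [hc, order_mul, order_X_pow, mul_comm L k]
      exact le_add_of_nonneg_right zero_le
    have h2 : (y ^ (m - k)).order = (((m - k) * d : ℕ) : ℕ∞) := by
      rw [ps_order_pow, hdo]
      simp only [nsmul_eq_mul]
      push_cast
      ring
    rw [h2]
    refine le_trans ?_ (add_le_add h1 le_rfl)
    rw [← Nat.cast_add, Nat.cast_le]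
    have : k * L ≥ k * d + k := by
      calc k * L ≥ k * (d + 1) := Nat.mul_le_mul_left k hdL
        _ = k * d + k := by ring
    calc m * d + 1 ≤ m * d + k := by omega
      _ = k * d + (m - k) * d + k := by
          rw [← Nat.add_mul]; congr 2; omega
      _ ≤ k * L + (m - k) * d := by omega
  have heq2 : y ^ m = -(∑ k ∈ Finset.Icc 1 m, a k * y ^ (m - k)) := by
    linear_combination heq
  have : ((m * d + 1 : ℕ) : ℕ∞) ≤ ((m * d : ℕ) : ℕ∞) := by
    rw [← hypow, heq2, ps_order_neg]
    exact hsum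
  rw [Nat.cast_le] at this
  omega

noncomputable def phi (K : Type*) [Field K] {n : ℕ} (ω : Fin n → ℕ) :
    MvPolynomial (Fin n) K →ₐ[K] PowerSeries K :=
  MvPolynomial.aeval fun i => (X : PowerSeries K) ^ ω i

lemma phi_monomial {K : Type*} [Field K] {n : ℕ} (ω : Fin n → ℕ) (α : Fin n →₀ ℕ) :
    phi K ω (MvPolynomial.monomial α (1 : K)) = (X : PowerSeries K) ^ (∑ i, ω i * α i) := by
  rw [phi, MvPolynomial.aeval_monomial, map_one, one_mul]
  rw [Finsupp.prod]
  have : ∀ i ∈ α.support, ((X : PowerSeries K) ^ ω i) ^ α i = X ^ (ω i * α i) := by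
    intro i _; rw [← pow_mul]
  rw [Finset.prod_congr rfl this, Finset.prod_pow_eq_pow_sum]
  congr 1
  refine Finset.sum_subset (f := fun i => ω i * α i) (Finset.subset_univ α.support) ?_
  intro i _ hi
  rw [Finsupp.notMem_support_iff.mp hi, mul_zero]

lemma X_pow_dvd_X_pow {K : Type*} [Field K] {a b : ℕ}
    (h : (X : PowerSeries K) ^ a ∣ X ^ b) : a ≤ b := by
  obtain ⟨c, hc⟩ := h
  have h1 := congrArg PowerSeries.order hc
  rw [order_X_pow, order_mul, order_X_pow] at h1
  have h2 : (a : ℕ∞) ≤ (b : ℕ∞) := h1 ▸ le_add_of_nonneg_right zero_le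
  exact_mod_cast h2

/-- existence of a decomposition -/
lemma exists_le_sum {ι : Type*} [DecidableEq ι] (s : Finset ι) (b : ι → ℕ) (L : ℕ)
    (h : L ≤ ∑ i ∈ s, b i) : ∃ k : ι → ℕ, (∀ i, k i ≤ b i) ∧ ∑ i ∈ s, k i = L := by
  induction s using Finset.induction generalizing L with
  | empty =>
    simp only [Finset.sum_empty, Nat.le_zero] at h
    exact ⟨fun _ => 0, fun i => Nat.zero_le _, by simp [h]⟩
  | @insert a s' hx ih =>
    rw [Finset.sum_insert hx] at h
    by_cases hc : L ≤ ∑ i ∈ s', b i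
    · obtain ⟨k, hk1, hk2⟩ := ih L hc
      refine ⟨Function.update k a 0, ?_, ?_⟩
      · intro i
        by_cases hia : i = a
        · subst hia; simp
        · rw [Function.update_of_ne hia]; exact hk1 i
      · rw [Finset.sum_insert hx, Function.update_self]
        have hcng : ∑ x ∈ s', Function.update k a 0 x = ∑ x ∈ s', k x := by
          apply Finset.sum_congr rfl
          intro i hi
          exact Function.update_of_ne (show i ≠ a from fun hh => hx (hh ▸ hi)) _ _
        omega
    · push_neg at hc
      obtain ⟨k, hk1, hk2⟩ := ih (∑ i ∈ s', b i) le_rfl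
      refine ⟨Function.update k a (L - ∑ i ∈ s', b i), ?_, ?_⟩
      · intro i
        by_cases hia : i = a
        · subst hia; rw [Function.update_self]; omega
        · rw [Function.update_of_ne hia]; exact hk1 i
      · rw [Finset.sum_insert hx, Function.update_self]
        have hcng : ∑ x ∈ s', Function.update k a (L - ∑ i ∈ s', b i) x = ∑ x ∈ s', k x := by
          apply Finset.sum_congr rfl
          intro i hi
          exact Function.update_of_ne (show i ≠ a from fun hh => hx (hh ▸ hi)) _ _
        omega

lemma prod_pow_mem {A : Type*} [CommRing A] {ι : Type*} [DecidableEq ι]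
    (J : Ideal A) (s : Finset ι) (g : ι → A) (hg : ∀ i, g i ∈ J) (k : ι → ℕ) :
    ∏ i ∈ s, g i ^ k i ∈ J ^ (∑ i ∈ s, k i) := by
  induction s using Finset.induction with
  | empty => simp [Ideal.one_eq_top]
  | @insert a s' hx ih =>
    rw [Finset.prod_insert hx, Finset.sum_insert hx, pow_add]
    exact Ideal.mul_mem_mul (Ideal.pow_mem_pow (hg a) _) ih

end Aux

theorem stmt7 {K : Type*} [Field K] {n : ℕ} (lam : Fin n → ℕ) (hlam : ∀ i, 0 < lam i)
    (L : ℕ) (hL : L = Finset.univ.lcm lam)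
    (ω : Fin n → ℕ) (hω : ∀ i, ω i = L / lam i)
    (α : Fin n →₀ ℕ) :
    (MvPolynomial.monomial α (1 : K) ∈ Ilam K lam ↔ 1 ≤ ∑ i, (α i : ℚ) / (lam i : ℚ)) ∧
    (MvPolynomial.monomial α (1 : K) ∈ Ilam K lam ↔ L ≤ ∑ i, ω i * α i) := by
  classical
  have hdvd : ∀ i, lam i ∣ L := fun i => hL ▸ Finset.dvd_lcm (Finset.mem_univ i)
  have hwl : ∀ i, ω i * lam i = L := fun i => by
    rw [hω i]; exact Nat.div_mul_cancel (hdvd i)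
  have hLpos : 0 < L := by
    rw [hL, Nat.pos_iff_ne_zero]
    intro h0
    obtain ⟨i, -, hi⟩ := Finset.lcm_eq_zero_iff.mp h0
    exact absurd hi (Nat.pos_iff_ne_zero.mp (hlam i))
  -- the key characterization
  have key : MvPolynomial.monomial α (1 : K) ∈ Ilam K lam ↔ L ≤ ∑ i, ω i * α i := by
    constructor
    · -- forward direction, via the power series valuation
      intro hmem
      set φ := phi K (n := n) ω with hφ
      have hmapJ : Ideal.map φ.toRingHom (Jlam K lam) ≤
          Ideal.span {(PowerSeries.X : PowerSeries K) ^ L} := by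
        rw [Jlam, Ideal.map_span, Ideal.span_le]
        rintro _ ⟨_, ⟨i, rfl⟩, rfl⟩
        simp only [AlgHom.toRingHom_eq_coe, RingHom.coe_coe, SetLike.mem_coe, map_pow]
        have : φ (MvPolynomial.X i) = PowerSeries.X ^ ω i := by
          rw [hφ, phi]; simp [MvPolynomial.aeval_X]
        rw [this, ← pow_mul, hwl i]
        exact Ideal.subset_span rfl
      have hmapI : Ideal.map φ.toRingHom (Ilam K lam) ≤
          Ideal.span {(PowerSeries.X : PowerSeries K) ^ L} := by
        rw [Ilam, Ideal.map_span, Ideal.span_le]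
        rintro _ ⟨x, hx, rfl⟩
        obtain ⟨m, hm, a, ha, heq⟩ := hx
        simp only [AlgHom.toRingHom_eq_coe, RingHom.coe_coe, SetLike.mem_coe]
        rw [Ideal.mem_span_singleton]
        apply ps_key L (φ x) m (fun k => φ (a k))
        · intro k hk
          have : φ (a k) ∈ Ideal.map φ.toRingHom ((Jlam K lam) ^ k) :=
            Ideal.mem_map_of_mem _ (ha k hk)
          rw [Ideal.map_pow] at this
          exact Ideal.pow_right_mono hmapJ k this
        · have := congrArg φ heq
          simpa only [map_add, map_sum, map_mul, map_pow, map_zero] using this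
      have : φ (MvPolynomial.monomial α (1 : K)) ∈
          Ideal.span {(PowerSeries.X : PowerSeries K) ^ L} :=
        hmapI (Ideal.mem_map_of_mem _ hmem)
      rw [hφ, phi_monomial, Ideal.mem_span_singleton] at this
      exact X_pow_dvd_X_pow this
    · -- reverse direction: construct an integral equation
      intro hle
      apply Ideal.subset_span
      refine ⟨L, hLpos, fun k => if k = L then -(MvPolynomial.monomial α (1 : K)) ^ L else 0,
        ?_, ?_⟩
      · intro k hk
        by_cases hkL : k = L
        · simp only []
          rw [if_pos hkL, hkL]
          apply neg_mem
          -- (monomial α 1)^L = monomial (L • α) 1 ∈ J^L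
          obtain ⟨kf, hkf1, hkf2⟩ := exists_le_sum Finset.univ (fun i => ω i * α i) L hle
          have hprod : ∏ i, (MvPolynomial.X i ^ lam i : MvPolynomial (Fin n) K) ^ kf i
              ∈ (Jlam K lam) ^ L := by
            rw [← hkf2]
            exact prod_pow_mem (Jlam K lam) Finset.univ
              (fun i => MvPolynomial.X i ^ lam i)
              (fun i => Ideal.subset_span (Set.mem_range_self i)) kf
          set δ : Fin n →₀ ℕ := Finsupp.equivFunOnFinite.symm (fun i => lam i * kf i) with hδ
          have hδap : ∀ i, δ i = lam i * kf i := fun i => rfl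
          have hδle : δ ≤ L • α := by
            intro i
            rw [hδap i, Finsupp.smul_apply, smul_eq_mul]
            calc lam i * kf i ≤ lam i * (ω i * α i) :=
                  Nat.mul_le_mul_left _ (hkf1 i)
              _ = (ω i * lam i) * α i := by ring
              _ = L * α i := by rw [hwl i]
          have hmono : (∏ i, (MvPolynomial.X i : MvPolynomial (Fin n) K) ^ δ i) =
              MvPolynomial.monomial δ 1 := by
            rw [← MvPolynomial.prod_X_pow_eq_monomial]
            exact (Finset.prod_subset (Finset.subset_univ _) (fun i _ hi => by
              rw [Finsupp.notMem_support_iff.mp hi, pow_zero])).symm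
          have hprod2 : (MvPolynomial.monomial δ (1 : K)) ∈ (Jlam K lam) ^ L := by
            rw [← hmono]
            have : (∏ i, (MvPolynomial.X i : MvPolynomial (Fin n) K) ^ δ i) =
                ∏ i, (MvPolynomial.X i ^ lam i : MvPolynomial (Fin n) K) ^ kf i := by
              refine Finset.prod_congr rfl fun i _ => ?_
              rw [hδap i, pow_mul]
            rw [this]
            exact hprod
          have hfact : (MvPolynomial.monomial α (1 : K)) ^ L =
              MvPolynomial.monomial (L • α - δ) 1 * MvPolynomial.monomial δ 1 := by
            rw [MvPolynomial.monomial_pow, one_pow, MvPolynomial.monomial_mul, one_mul]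
            congr 1
            rw [tsub_add_cancel_of_le hδle]
          rw [hfact]
          exact Ideal.mul_mem_left _ _ hprod2
        · simp only [if_neg hkL]
          exact Ideal.zero_mem _
      · rw [Finset.sum_eq_single L]
        · simp
        · intro k hk hkL; simp [if_neg hkL]
        · intro h; exact absurd (Finset.mem_Icc.mpr ⟨hLpos, le_rfl⟩) h
  refine ⟨?_, key⟩
  rw [key]
  -- rational equivalence
  have hcast : (↑(∑ i, ω i * α i) : ℚ) = L * ∑ i, (α i : ℚ) / (lam i : ℚ) := by
    push_cast
    rw [Finset.mul_sum]
    refine Finset.sum_congr rfl fun i _ => ?_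
    have hlam0 : (lam i : ℚ) ≠ 0 := Nat.cast_ne_zero.mpr (Nat.pos_iff_ne_zero.mp (hlam i))
    have : (ω i : ℚ) = (L : ℚ) / (lam i : ℚ) := by
      rw [hω i]
      rw [Nat.cast_div (hdvd i) hlam0]
    rw [this]
    field_simp
  constructor
  · intro h
    have : (L : ℚ) ≤ ↑(∑ i, ω i * α i) := Nat.cast_le.mpr h
    rw [hcast] at this
    have hL0 : (0 : ℚ) < L := Nat.cast_pos.mpr hLpos
    nlinarith
  · intro h
    have : (L : ℚ) * 1 ≤ (L : ℚ) * ∑ i, (α i : ℚ) / (lam i : ℚ) := by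
      apply mul_le_mul_of_nonneg_left h (Nat.cast_nonneg L)
    rw [mul_one, ← hcast] at this
    exact_mod_cast this
end

section
/- The following are equivalent: (a) I(λ) is a normal ideal; (b) whenever α ∈ ℕⁿ and p ∈ ℕ satisfy ω₁a₁ + ⋯ + ωₙaₙ ≥ pL, there exist β₁,…,β_p ∈ Γ with α = β₁ + ⋯ + β_p; (c) whenever α = (a₁,…,aₙ) ∈ ℕⁿ with a_i < λ_i for all i and 1 ≤ p < n satisfy ω₁a₁ + ⋯ + ωₙaₙ ≥ pL, there exist β₁,…,β_p ∈ Γ with α = β₁ + ⋯ + β_p. -/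
open Finset

namespace Stmt8Aux

open MvPolynomial Pointwise

variable {K : Type*} [Field K] {n : ℕ}

/-- weighted degree -/
def wt (ω : Fin n → ℕ) (α : Fin n →₀ ℕ) : ℕ := ∑ i, ω i * α i

variable (ω : Fin n → ℕ)

lemma wt_add (a b : Fin n →₀ ℕ) : wt ω (a + b) = wt ω a + wt ω b := by
  simp [wt, Finsupp.add_apply, mul_add, Finset.sum_add_distrib]

lemma wt_mono {a b : Fin n →₀ ℕ} (h : a ≤ b) : wt ω a ≤ wt ω b :=
  Finset.sum_le_sum fun i _ => Nat.mul_le_mul_left _ (h i)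

lemma wt_single (i : Fin n) (k : ℕ) : wt ω (Finsupp.single i k) = ω i * k := by
  simp [wt, Finsupp.single_apply]

/-- The weighting homomorphism sending `X i` to `X i * t ^ ω i`. -/
noncomputable def psi (K : Type*) [Field K] {n : ℕ} (ω : Fin n → ℕ) :
    MvPolynomial (Fin n) K →+* Polynomial (MvPolynomial (Fin n) K) :=
  eval₂Hom (Polynomial.C.comp C) fun i => Polynomial.C (X i) * Polynomial.X ^ ω i

lemma psi_monomial (α : Fin n →₀ ℕ) (c : K) :
    psi K ω (monomial α c) = Polynomial.C (monomial α c) * Polynomial.X ^ wt ω α := by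
  have hsum : ∑ i ∈ α.support, ω i * α i = wt ω α := by
    refine Finset.sum_subset (Finset.subset_univ _) fun i _ hi => ?_
    rw [Finsupp.notMem_support_iff.mp hi, mul_zero]
  have h1 : psi K ω (monomial α c)
      = Polynomial.C (C c) * α.prod fun i e => (Polynomial.C (X i) * Polynomial.X ^ ω i) ^ e := by
    simp [psi, eval₂_monomial]
  rw [h1, Finsupp.prod]
  simp_rw [mul_pow, ← Polynomial.C_pow, ← pow_mul]
  rw [Finset.prod_mul_distrib, ← map_prod, Finset.prod_pow_eq_pow_sum, hsum,
    monomial_eq, Finsupp.prod, map_mul, map_prod]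
  ring

end Stmt8Aux

namespace Stmt8Aux
variable {K : Type*} [Field K] {n : ℕ} (ω : Fin n → ℕ)
open MvPolynomial Pointwise

lemma coeff_coeff_psi (f : MvPolynomial (Fin n) K) (α : Fin n →₀ ℕ) :
    MvPolynomial.coeff α (Polynomial.coeff (psi K ω f) (wt ω α)) = MvPolynomial.coeff α f := by
  conv_lhs => rw [f.as_sum, map_sum]
  rw [Polynomial.finset_sum_coeff]
  have h1 : ∀ v : Fin n →₀ ℕ,
      Polynomial.coeff (psi K ω (monomial v (coeff v f))) (wt ω α)
        = if wt ω v = wt ω α then monomial v (coeff v f) else 0 := fun v => by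
    rw [psi_monomial, Polynomial.C_mul_X_pow_eq_monomial, Polynomial.coeff_monomial]
  simp_rw [h1]
  rw [MvPolynomial.coeff_sum]
  rw [Finset.sum_eq_single α (fun b _ hb => ?_) (fun h => ?_)]
  · simp [coeff_monomial]
  · simp [apply_ite (coeff α), coeff_monomial, hb]
  · simp [notMem_support_iff.mp h]
end Stmt8Aux

namespace Stmt8Aux
variable {K : Type*} [Field K] {n : ℕ} (ω : Fin n → ℕ)
open MvPolynomial Pointwise

/-- min weight of the monomials of `f`, as trailing degree through `psi`. -/
noncomputable def vdeg (f : MvPolynomial (Fin n) K) : ℕ∞ := (psi K ω f).trailingDegree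

lemma vdeg_le_wt {f : MvPolynomial (Fin n) K} {α : Fin n →₀ ℕ} (h : α ∈ f.support) :
    vdeg ω f ≤ (wt ω α : ℕ∞) := by
  refine Polynomial.trailingDegree_le_of_ne_zero fun h0 => ?_
  apply mem_support_iff.mp h
  rw [← coeff_coeff_psi ω f α, h0, coeff_zero]

lemma vdeg_zero : vdeg ω (0 : MvPolynomial (Fin n) K) = ⊤ := by
  simp [vdeg, Polynomial.trailingDegree_zero]

lemma vdeg_mul (f g : MvPolynomial (Fin n) K) : vdeg ω (f * g) = vdeg ω f + vdeg ω g := by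
  rw [vdeg, map_mul, Polynomial.trailingDegree_mul]; rfl

lemma vdeg_monomial (α : Fin n →₀ ℕ) {c : K} (hc : c ≠ 0) :
    vdeg ω (monomial α c) = (wt ω α : ℕ∞) := by
  rw [vdeg, psi_monomial, Polynomial.C_mul_X_pow_eq_monomial,
    Polynomial.trailingDegree_monomial (by simpa using hc)]

lemma le_trailingDegree_add' {R : Type*} [Semiring R] {p q : Polynomial R} {c : ℕ∞}
    (hp : c ≤ p.trailingDegree) (hq : c ≤ q.trailingDegree) :
    c ≤ (p + q).trailingDegree := by
  show c ≤ (p + q).support.min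
  refine Finset.le_min fun d hd => ?_
  rcases Finset.mem_union.mp (Polynomial.support_add hd) with h | h
  · exact hp.trans (Finset.min_le h)
  · exact hq.trans (Finset.min_le h)

lemma le_vdeg_add {f g : MvPolynomial (Fin n) K} {c : ℕ∞}
    (hf : c ≤ vdeg ω f) (hg : c ≤ vdeg ω g) : c ≤ vdeg ω (f + g) := by
  rw [vdeg, map_add]; exact le_trailingDegree_add' hf hg

lemma le_vdeg_sum {ι : Type*} {s : Finset ι} {g : ι → MvPolynomial (Fin n) K} {c : ℕ∞}
    (h : ∀ j ∈ s, c ≤ vdeg ω (g j)) : c ≤ vdeg ω (∑ j ∈ s, g j) := by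
  induction s using Finset.cons_induction with
  | empty => simp [vdeg_zero]
  | cons a s ha ih =>
    rw [Finset.sum_cons]
    exact le_vdeg_add ω (h a (Finset.mem_cons_self a s))
      (ih fun j hj => h j (Finset.mem_cons_of_mem hj))

lemma le_vdeg_span {T : Set (MvPolynomial (Fin n) K)} {c : ℕ∞}
    (hT : ∀ t ∈ T, c ≤ vdeg ω t) {f : MvPolynomial (Fin n) K} (hf : f ∈ Ideal.span T) :
    c ≤ vdeg ω f := by
  induction hf using Submodule.span_induction with
  | mem x h => exact hT x h
  | zero => simp [vdeg_zero]
  | add x y hx hy ihx ihy => exact le_vdeg_add ω ihx ihy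
  | smul a x hx ih => rw [smul_eq_mul, vdeg_mul]; exact ih.trans le_add_self

lemma le_vdeg_pow {I : Ideal (MvPolynomial (Fin n) K)} {c : ℕ}
    (hI : ∀ g ∈ I, (c : ℕ∞) ≤ vdeg ω g) :
    ∀ k : ℕ, ∀ g ∈ I ^ k, ((k * c : ℕ) : ℕ∞) ≤ vdeg ω g := by
  intro k
  induction k with
  | zero => intro g _; simp
  | succ k ih =>
    intro g hg
    rw [pow_succ] at hg
    refine Submodule.mul_induction_on hg (fun x hx y hy => ?_)
      (fun x y hx hy => le_vdeg_add ω hx hy)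
    rw [vdeg_mul]
    have : (((k + 1) * c : ℕ) : ℕ∞) = ((k * c : ℕ) : ℕ∞) + (c : ℕ∞) := by
      push_cast; ring
    rw [this]
    exact add_le_add (ih x hx) (hI y hy)

lemma le_vdeg_of_integral {Q : Ideal (MvPolynomial (Fin n) K)} {c : ℕ}
    (hQ : ∀ k : ℕ, ∀ g ∈ Q ^ k, ((k * c : ℕ) : ℕ∞) ≤ vdeg ω g)
    {f : MvPolynomial (Fin n) K} (hf : IsIntegralOverIdeal Q f) : (c : ℕ∞) ≤ vdeg ω f := by
  obtain ⟨m, hm, a, ha, heq⟩ := hf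
  by_cases hf0 : f = 0
  · simp [hf0, vdeg_zero]
  have hψ : psi K ω f ≠ 0 := by
    intro h0
    obtain ⟨α, hα⟩ := MvPolynomial.support_nonempty.mpr hf0
    exact mem_support_iff.mp hα (by rw [← coeff_coeff_psi ω f α, h0]; simp)
  set τ := (psi K ω f).natTrailingDegree with hτ
  have hvf : vdeg ω f = (τ : ℕ∞) := Polynomial.trailingDegree_eq_natTrailingDegree hψ
  by_contra hlt
  push_neg at hlt
  rw [hvf] at hlt
  have hτc : τ + 1 ≤ c := by exact_mod_cast hlt
  have hpow : ∀ s : ℕ, vdeg ω (f ^ s) = ((s * τ : ℕ) : ℕ∞) := by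
    intro s
    induction s with
    | zero => simp [vdeg, Polynomial.trailingDegree_one]
    | succ s ih =>
      rw [pow_succ, vdeg_mul, ih, hvf]
      push_cast; ring
  have hsum : f ^ m = ∑ k ∈ Finset.Icc 1 m, -(a k * f ^ (m - k)) := by
    have h := eq_neg_of_add_eq_zero_left heq
    rw [h, ← Finset.sum_neg_distrib]
  have hbound : ((m * τ + 1 : ℕ) : ℕ∞) ≤ vdeg ω (f ^ m) := by
    rw [hsum]
    refine le_vdeg_sum ω fun k hk => ?_
    obtain ⟨hk1, hk2⟩ := Finset.mem_Icc.mp hk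
    have hvneg : vdeg ω (-(a k * f ^ (m - k))) = vdeg ω (a k * f ^ (m - k)) := by
      rw [vdeg, map_neg, Polynomial.trailingDegree_neg]; rfl
    rw [hvneg, vdeg_mul, hpow]
    have h1 : ((k * c : ℕ) : ℕ∞) ≤ vdeg ω (a k) := hQ k (a k) (ha k hk)
    have h2 : (m * τ + 1 : ℕ) ≤ k * c + (m - k) * τ := by
      have : k * c ≥ k * τ + k := by
        calc k * τ + k = k * (τ + 1) := by ring
        _ ≤ k * c := Nat.mul_le_mul_left k hτc
      have hmτ : m * τ = k * τ + (m - k) * τ := by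
        rw [← Nat.add_mul, Nat.add_sub_cancel' hk2]
      omega
    calc ((m * τ + 1 : ℕ) : ℕ∞) ≤ ((k * c + (m - k) * τ : ℕ) : ℕ∞) := by exact_mod_cast h2
      _ = ((k * c : ℕ) : ℕ∞) + (((m - k) * τ : ℕ) : ℕ∞) := by push_cast; ring
      _ ≤ vdeg ω (a k) + (((m - k) * τ : ℕ) : ℕ∞) := add_le_add h1 le_rfl
  rw [hpow m] at hbound
  have : (m * τ + 1 : ℕ) ≤ m * τ := by exact_mod_cast hbound
  omega
end Stmt8Aux

namespace Stmt8Aux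
variable {K : Type*} [Field K] {n : ℕ}
open MvPolynomial Pointwise

lemma prod_monomial_one {ι : Type*} (s : Finset ι) (g : ι → (Fin n →₀ ℕ)) :
    (∏ j ∈ s, MvPolynomial.monomial (g j) (1 : K)) = MvPolynomial.monomial (∑ j ∈ s, g j) 1 := by
  induction s using Finset.cons_induction with
  | empty => simp
  | cons a s ha ih => rw [Finset.prod_cons, Finset.sum_cons, ih, monomial_mul, one_mul]

lemma prod_pow_mem (lam : Fin n → ℕ) (s : Finset (Fin n)) (b : Fin n → ℕ) :
    (∏ i ∈ s, (MvPolynomial.X i ^ lam i : MvPolynomial (Fin n) K) ^ b i)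
      ∈ Jlam K lam ^ (∑ i ∈ s, b i) := by
  induction s using Finset.cons_induction with
  | empty => simp
  | cons a s ha ih =>
    rw [Finset.prod_cons, Finset.sum_cons, pow_add]
    have hX : (MvPolynomial.X a ^ lam a : MvPolynomial (Fin n) K) ∈ Jlam K lam :=
      Ideal.subset_span (Set.mem_range_self a)
    exact Ideal.mul_mem_mul (Ideal.pow_mem_pow hX _) ih

lemma exists_le_sum {ι : Type*} [DecidableEq ι] (s : Finset ι) (b : ι → ℕ) (N : ℕ)
    (h : N ≤ ∑ i ∈ s, b i) :
    ∃ c : ι → ℕ, (∀ i, c i ≤ b i) ∧ ∑ i ∈ s, c i = N := by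
  induction s using Finset.cons_induction generalizing N with
  | empty =>
    simp only [Finset.sum_empty, Nat.le_zero] at h
    exact ⟨fun _ => 0, fun _ => Nat.zero_le _, by simp [h]⟩
  | cons a s ha ih =>
    rw [Finset.sum_cons] at h
    obtain ⟨c', hc1, hc2⟩ := ih (N - min N (b a)) (by omega)
    refine ⟨Function.update c' a (min N (b a)), fun i => ?_, ?_⟩
    · rcases eq_or_ne i a with rfl | hne
      · simp
      · simp [Function.update_of_ne hne]; exact hc1 i
    · rw [Finset.sum_cons, Function.update_self,
        Finset.sum_congr rfl fun i hi => Function.update_of_ne (by rintro rfl; exact ha hi) _ c', hc2]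
      omega

lemma sum_single_apply (g : Fin n → ℕ) (j : Fin n) :
    (∑ i, Finsupp.single i (g i)) j = g j := by
  have h := map_sum (Finsupp.applyAddHom (M := ℕ) j) (fun i => Finsupp.single i (g i)) Finset.univ
  simp only [Finsupp.applyAddHom_apply] at h
  rw [h]
  simp [Finsupp.single_apply]

variable (lam ω : Fin n → ℕ) (L : ℕ)

/-- monomials of weight `≥ p·L` are integral over `Jlam^p`. -/
lemma monomial_integral_pow (hwl : ∀ i, ω i * lam i = L) (hL1 : 0 < L)
    {β : Fin n →₀ ℕ} {p : ℕ} (hwt : p * L ≤ wt ω β) :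
    IsIntegralOverIdeal (Jlam K lam ^ p) (MvPolynomial.monomial β (1 : K)) := by
  obtain ⟨c, hc1, hc2⟩ := exists_le_sum Finset.univ (fun i => ω i * β i) (p * L) hwt
  set δ : Fin n →₀ ℕ := ∑ i, Finsupp.single i (c i * lam i) with hδ
  have hδle : δ ≤ L • β := by
    intro j
    rw [hδ, sum_single_apply]
    calc c j * lam j ≤ (ω j * β j) * lam j := Nat.mul_le_mul_right _ (hc1 j)
      _ = (ω j * lam j) * β j := by ring
      _ = L * β j := by rw [hwl]
      _ = (L • β) j := by simp [Finsupp.smul_apply]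
  have hmem : (MvPolynomial.monomial β (1 : K)) ^ L ∈ (Jlam K lam ^ p) ^ L := by
    rw [← pow_mul, monomial_pow, one_pow]
    have h1 : (MvPolynomial.monomial (L • β) (1 : K))
        = MvPolynomial.monomial δ 1 * MvPolynomial.monomial (L • β - δ) 1 := by
      rw [monomial_mul, one_mul, add_tsub_cancel_of_le hδle]
    have h2 : (MvPolynomial.monomial δ (1 : K))
        = ∏ i, (MvPolynomial.X i ^ lam i : MvPolynomial (Fin n) K) ^ c i := by
      rw [hδ, ← prod_monomial_one]
      refine Finset.prod_congr rfl fun i _ => ?_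
      rw [X_pow_eq_monomial, monomial_pow, one_pow, Finsupp.smul_single, smul_eq_mul]
    rw [h1, h2]
    have h3 : (∏ i, (MvPolynomial.X i ^ lam i : MvPolynomial (Fin n) K) ^ c i)
        ∈ Jlam K lam ^ (p * L) := by
      rw [← hc2]; exact prod_pow_mem lam Finset.univ c
    exact Ideal.mul_mem_right _ _ h3
  refine ⟨L, hL1, fun k => if k = L then -(MvPolynomial.monomial β (1 : K)) ^ L else 0,
    fun k hk => ?_, ?_⟩
  · rcases eq_or_ne k L with rfl | hne
    · simpa using neg_mem hmem
    · simp [hne]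
  · rw [Finset.sum_eq_single L (fun b _ hb => by simp [hb]) (fun h => absurd (Finset.mem_Icc.mpr ⟨hL1, le_refl L⟩) h)]
    simp

end Stmt8Aux

namespace Stmt8Aux
variable {K : Type*} [Field K] {n : ℕ}
open MvPolynomial Pointwise

lemma integral_mono {A : Type*} [CommRing A] {I J : Ideal A} (h : I ≤ J) {x : A}
    (hx : IsIntegralOverIdeal I x) : IsIntegralOverIdeal J x := by
  obtain ⟨m, hm, a, ha, he⟩ := hx
  exact ⟨m, hm, a, fun k hk => Ideal.pow_right_mono h k (ha k hk), he⟩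

lemma jlam_le_ilam (lam : Fin n → ℕ) : Jlam K lam ≤ Ilam K lam := by
  intro x hx
  refine Ideal.subset_span ⟨1, one_pos, fun _ => -x, fun k hk => ?_, ?_⟩
  · obtain rfl : k = 1 := by simpa using hk
    simpa [pow_one] using neg_mem hx
  · simp

variable (lam ω : Fin n → ℕ) (L : ℕ)

lemma le_vdeg_jlam (hwl : ∀ i, ω i * lam i = L) :
    ∀ g ∈ Jlam K lam, (L : ℕ∞) ≤ vdeg ω g := by
  intro g hg
  refine le_vdeg_span ω (fun t ht => ?_) hg
  obtain ⟨i, rfl⟩ := ht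
  show (L : ℕ∞) ≤ vdeg ω (MvPolynomial.X i ^ lam i)
  rw [X_pow_eq_monomial, vdeg_monomial ω _ (one_ne_zero), wt_single, hwl]

lemma integral_wt_ge (hwl : ∀ i, ω i * lam i = L)
    {f : MvPolynomial (Fin n) K} (hf : IsIntegralOverIdeal (Jlam K lam) f) :
    ∀ α ∈ f.support, L ≤ wt ω α := by
  intro α hα
  have h1 : (L : ℕ∞) ≤ vdeg ω f := by
    refine le_vdeg_of_integral ω (fun k g hg => ?_) hf
    have := le_vdeg_pow ω (le_vdeg_jlam lam ω L hwl) k g hg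
    exact this
  exact_mod_cast h1.trans (vdeg_le_wt ω hα)

lemma ilam_eq (hwl : ∀ i, ω i * lam i = L) (hL1 : 0 < L) :
    Ilam K lam = Ideal.span ((fun s => MvPolynomial.monomial s (1 : K)) ''
      {β : Fin n →₀ ℕ | L ≤ wt ω β}) := by
  refine le_antisymm (Ideal.span_le.mpr fun f hf => ?_) (Ideal.span_le.mpr ?_)
  · rw [SetLike.mem_coe, mem_ideal_span_monomial_image]
    intro α hα
    exact ⟨α, integral_wt_ge lam ω L hwl hf α hα, le_refl α⟩
  · rintro - ⟨β, hβ, rfl⟩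
    refine Ideal.subset_span ?_
    have := monomial_integral_pow (K := K) lam ω L hwl hL1 (β := β) (p := 1)
      (by simpa using hβ)
    rwa [pow_one] at this

lemma mono_mem_iff (hwl : ∀ i, ω i * lam i = L) (hL1 : 0 < L) (β : Fin n →₀ ℕ) :
    MvPolynomial.monomial β (1 : K) ∈ Ilam K lam ↔ L ≤ wt ω β := by
  rw [ilam_eq lam ω L hwl hL1]
  constructor
  · intro h
    rw [mem_ideal_span_monomial_image] at h
    obtain ⟨s, hs, hsle⟩ := h β (by simp [support_monomial])
    exact hs.trans (wt_mono ω hsle)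
  · intro h
    exact Ideal.subset_span ⟨β, h, rfl⟩

lemma le_vdeg_ilam (hwl : ∀ i, ω i * lam i = L) (hL1 : 0 < L) :
    ∀ g ∈ Ilam K lam, (L : ℕ∞) ≤ vdeg ω g := by
  intro g hg
  rw [ilam_eq lam ω L hwl hL1] at hg
  refine le_vdeg_span ω (fun t ht => ?_) hg
  obtain ⟨β, hβ, rfl⟩ := ht
  rw [vdeg_monomial ω _ (one_ne_zero)]
  exact_mod_cast hβ

/-- iterated pointwise sum of a set of exponents -/
def SumSet (A : Set (Fin n →₀ ℕ)) : ℕ → Set (Fin n →₀ ℕ)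
  | 0 => {0}
  | p + 1 => SumSet A p + A

lemma image_monomial_mul (S A : Set (Fin n →₀ ℕ)) :
    (((fun s => MvPolynomial.monomial s (1 : K)) '' S) * ((fun s => MvPolynomial.monomial s (1 : K)) '' A))
      = (fun s => MvPolynomial.monomial s (1 : K)) '' (S + A) := by
  ext x
  constructor
  · rintro ⟨-, ⟨s, hs, rfl⟩, -, ⟨a, ha, rfl⟩, rfl⟩
    exact ⟨s + a, Set.add_mem_add hs ha, by simp [monomial_mul]⟩
  · rintro ⟨-, ⟨s, hs, a, ha, rfl⟩, rfl⟩
    exact ⟨_, ⟨s, hs, rfl⟩, _, ⟨a, ha, rfl⟩, by simp [monomial_mul]⟩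

lemma span_monomial_pow (A : Set (Fin n →₀ ℕ)) (p : ℕ) :
    (Ideal.span ((fun s => MvPolynomial.monomial s (1 : K)) '' A)) ^ p
      = Ideal.span ((fun s => MvPolynomial.monomial s (1 : K)) '' SumSet A p) := by
  induction p with
  | zero =>
    rw [pow_zero, SumSet]
    simp only [Set.image_singleton]
    rw [show (MvPolynomial.monomial (0 : Fin n →₀ ℕ) (1 : K)) = 1 by simp, Ideal.span_singleton_one,
      Ideal.one_eq_top]
  | succ p ih =>
    rw [pow_succ, ih, Ideal.span_mul_span', image_monomial_mul, SumSet]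

lemma sumSet_exists {A : Set (Fin n →₀ ℕ)} :
    ∀ {p : ℕ} {δ : Fin n →₀ ℕ}, δ ∈ SumSet A p →
      ∃ g : Fin p → (Fin n →₀ ℕ), (∀ j, g j ∈ A) ∧ δ = ∑ j, g j := by
  intro p
  induction p with
  | zero =>
    intro δ hδ
    exact ⟨fun j => j.elim0, fun j => j.elim0, by simpa [SumSet] using hδ⟩
  | succ p ih =>
    intro δ hδ
    obtain ⟨d, hd, a, ha, rfl⟩ := hδ
    obtain ⟨g, hg1, hg2⟩ := ih hd
    refine ⟨Fin.snoc g a, fun j => ?_, ?_⟩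
    · refine Fin.lastCases ?_ (fun j' => ?_) j
      · simpa [Fin.snoc_last] using ha
      · simpa [Fin.snoc_castSucc] using hg1 j'
    · rw [Fin.sum_univ_castSucc]
      simp [Fin.snoc_castSucc, Fin.snoc_last, ← hg2]

lemma prod_mem_pow {A : Type*} [CommRing A] (I : Ideal A) :
    ∀ {p : ℕ} (g : Fin p → A), (∀ j, g j ∈ I) → (∏ j, g j) ∈ I ^ p := by
  intro p
  induction p with
  | zero => intro g _; simp
  | succ p ih =>
    intro g hg
    rw [Fin.prod_univ_castSucc, pow_succ]
    exact Ideal.mul_mem_mul (ih _ fun j => hg _) (hg _)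

end Stmt8Aux

theorem stmt8 {K : Type*} [Field K] {n : ℕ} (lam : Fin n → ℕ) (hlam : ∀ i, 0 < lam i)
    (L : ℕ) (hL : L = Finset.univ.lcm lam)
    (ω : Fin n → ℕ) (hω : ∀ i, ω i = L / lam i) :
    (IsNormalIdeal (Ilam K lam) ↔
      ∀ (α : Fin n →₀ ℕ) (p : ℕ), 1 ≤ p → p * L ≤ ∑ i, ω i * α i →
        ∃ β : Fin p → (Fin n →₀ ℕ),
          (∀ j, MvPolynomial.monomial (β j) (1 : K) ∈ Ilam K lam) ∧ α = ∑ j, β j) ∧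
    (IsNormalIdeal (Ilam K lam) ↔
      ∀ (α : Fin n →₀ ℕ), (∀ i, α i < lam i) →
        ∀ p : ℕ, 1 ≤ p → p < n → p * L ≤ ∑ i, ω i * α i →
          ∃ β : Fin p → (Fin n →₀ ℕ),
            (∀ j, MvPolynomial.monomial (β j) (1 : K) ∈ Ilam K lam) ∧ α = ∑ j, β j) := by
  classical
  have hdvd : ∀ i, lam i ∣ L := fun i => hL ▸ Finset.dvd_lcm (Finset.mem_univ i)
  have hL1 : 0 < L := by
    rcases Nat.eq_zero_or_pos L with h0 | h
    · exfalso
      have h1 : Finset.univ.lcm lam = 0 := hL ▸ h0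
      obtain ⟨i, -, hi⟩ := Finset.lcm_eq_zero_iff.mp h1
      exact (hlam i).ne' hi
    · exact h
  have hwl : ∀ i, ω i * lam i = L := fun i => by
    rw [hω]; exact Nat.div_mul_cancel (hdvd i)
  have hω1 : ∀ i, 0 < ω i := fun i => Nat.pos_of_ne_zero fun h => by
    have := hwl i
    rw [h, zero_mul] at this
    omega
  -- (a) → (b)
  have hnb : IsNormalIdeal (Ilam K lam) →
      ∀ (α : Fin n →₀ ℕ) (p : ℕ), 1 ≤ p → p * L ≤ ∑ i, ω i * α i →
        ∃ β : Fin p → (Fin n →₀ ℕ),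
          (∀ j, MvPolynomial.monomial (β j) (1 : K) ∈ Ilam K lam) ∧ α = ∑ j, β j := by
    intro hnorm α p hp hwt
    have hint : IsIntegralOverIdeal (Ilam K lam ^ p) (MvPolynomial.monomial α (1 : K)) :=
      Stmt8Aux.integral_mono (Ideal.pow_right_mono (Stmt8Aux.jlam_le_ilam lam) p)
        (Stmt8Aux.monomial_integral_pow lam ω L hwl hL1 hwt)
    have hmem := hnorm p hp _ hint
    rw [Stmt8Aux.ilam_eq lam ω L hwl hL1, Stmt8Aux.span_monomial_pow,
      MvPolynomial.mem_ideal_span_monomial_image] at hmem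
    obtain ⟨δ, hδS, hδle⟩ := hmem α (by simp [MvPolynomial.support_monomial])
    obtain ⟨g, hg1, hg2⟩ := Stmt8Aux.sumSet_exists hδS
    set i0 : Fin p := ⟨0, hp⟩ with hi0def
    have hi0 : i0 ∈ Finset.univ := Finset.mem_univ _
    refine ⟨Function.update g i0 (g i0 + (α - δ)), fun j => ?_, ?_⟩
    · rw [Stmt8Aux.mono_mem_iff lam ω L hwl hL1]
      rcases eq_or_ne j i0 with rfl | hne
      · rw [Function.update_self, Stmt8Aux.wt_add]
        exact le_trans (hg1 i0) le_self_add
      · rw [Function.update_of_ne hne]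
        exact hg1 j
    · rw [Finset.sum_update_of_mem hi0, Finset.sdiff_singleton_eq_erase]
      have h2 : g i0 + ∑ j ∈ Finset.univ.erase i0, g j = δ := by
        rw [Finset.add_sum_erase _ g hi0, ← hg2]
      calc α = δ + (α - δ) := (add_tsub_cancel_of_le hδle).symm
        _ = (g i0 + (α - δ)) + ∑ j ∈ Finset.univ.erase i0, g j := by
            rw [← h2, add_right_comm]
  -- (b) → (a)
  have hbn : (∀ (α : Fin n →₀ ℕ) (p : ℕ), 1 ≤ p → p * L ≤ ∑ i, ω i * α i →
      ∃ β : Fin p → (Fin n →₀ ℕ),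
        (∀ j, MvPolynomial.monomial (β j) (1 : K) ∈ Ilam K lam) ∧ α = ∑ j, β j) →
      IsNormalIdeal (Ilam K lam) := by
    intro hb m hm f hf
    have hQ : ∀ k : ℕ, ∀ g ∈ (Ilam K lam ^ m) ^ k,
        ((k * (m * L) : ℕ) : ℕ∞) ≤ Stmt8Aux.vdeg ω g := by
      intro k g hg
      rw [← pow_mul] at hg
      have h := Stmt8Aux.le_vdeg_pow ω (Stmt8Aux.le_vdeg_ilam lam ω L hwl hL1) (m * k) g hg
      rwa [show (m * k) * L = k * (m * L) by ring] at h
    have hv := Stmt8Aux.le_vdeg_of_integral ω hQ hf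
    rw [f.as_sum]
    refine Ideal.sum_mem _ fun α hα => ?_
    have hwtα : m * L ≤ Stmt8Aux.wt ω α := by
      exact_mod_cast hv.trans (Stmt8Aux.vdeg_le_wt ω hα)
    obtain ⟨β, hβ1, hβ2⟩ := hb α m hm hwtα
    have hCm : MvPolynomial.monomial α (MvPolynomial.coeff α f)
        = MvPolynomial.C (MvPolynomial.coeff α f) * MvPolynomial.monomial α 1 := by
      rw [MvPolynomial.C_mul_monomial, mul_one]
    rw [hCm, hβ2, ← Stmt8Aux.prod_monomial_one]
    exact Ideal.mul_mem_left _ _ (Stmt8Aux.prod_mem_pow _ _ hβ1)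
  -- (c) → (b)
  have hcb : (∀ (α : Fin n →₀ ℕ), (∀ i, α i < lam i) →
      ∀ p : ℕ, 1 ≤ p → p < n → p * L ≤ ∑ i, ω i * α i →
        ∃ β : Fin p → (Fin n →₀ ℕ),
          (∀ j, MvPolynomial.monomial (β j) (1 : K) ∈ Ilam K lam) ∧ α = ∑ j, β j) →
      ∀ (α : Fin n →₀ ℕ) (p : ℕ), 1 ≤ p → p * L ≤ ∑ i, ω i * α i →
        ∃ β : Fin p → (Fin n →₀ ℕ),
          (∀ j, MvPolynomial.monomial (β j) (1 : K) ∈ Ilam K lam) ∧ α = ∑ j, β j := by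
    intro hc
    have claim : ∀ p : ℕ, 1 ≤ p → ∀ α : Fin n →₀ ℕ, p * L ≤ Stmt8Aux.wt ω α →
        ∃ β : Fin p → (Fin n →₀ ℕ), (∀ j, L ≤ Stmt8Aux.wt ω (β j)) ∧ α = ∑ j, β j := by
      intro p
      induction p with
      | zero => exact fun h => absurd h (by omega)
      | succ p ih =>
        intro _ α hα
        rcases Nat.eq_zero_or_pos p with rfl | hp
        · refine ⟨fun _ => α, fun j => ?_, ?_⟩
          · simpa using hα
          · simp
        by_cases hex : ∃ i, lam i ≤ α i
        · obtain ⟨i, hi⟩ := hex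
          have hsle : Finsupp.single i (lam i) ≤ α := Finsupp.single_le_iff.mpr hi
          have hsum' : (α - Finsupp.single i (lam i)) + Finsupp.single i (lam i) = α :=
            tsub_add_cancel_of_le hsle
          have hwt' : p * L ≤ Stmt8Aux.wt ω (α - Finsupp.single i (lam i)) := by
            have h1 : Stmt8Aux.wt ω (α - Finsupp.single i (lam i)) + L = Stmt8Aux.wt ω α := by
              conv_rhs => rw [← hsum']
              rw [Stmt8Aux.wt_add, Stmt8Aux.wt_single, hwl]
            have hmul : (p + 1) * L = p * L + L := by ring
            omega
          obtain ⟨β', hβ'1, hβ'2⟩ := ih hp _ hwt'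
          refine ⟨Fin.snoc β' (Finsupp.single i (lam i)), fun j => ?_, ?_⟩
          · refine Fin.lastCases ?_ (fun j' => ?_) j
            · rw [Fin.snoc_last, Stmt8Aux.wt_single, hwl]
            · rw [Fin.snoc_castSucc]
              exact hβ'1 j'
          · rw [Fin.sum_univ_castSucc]
            simp only [Fin.snoc_castSucc, Fin.snoc_last]
            rw [← hβ'2, hsum']
        · push_neg at hex
          have hn : p + 1 < n := by
            by_contra hge
            push_neg at hge
            have hb' : ∀ i, ω i * α i ≤ L - 1 := fun i => by
              have h1 : ω i * α i < ω i * lam i :=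
                mul_lt_mul_of_pos_left (hex i) (hω1 i)
              rw [hwl] at h1
              omega
            have hle : Stmt8Aux.wt ω α ≤ n * (L - 1) := by
              calc Stmt8Aux.wt ω α ≤ ∑ _i : Fin n, (L - 1) :=
                    Finset.sum_le_sum fun i _ => hb' i
                _ = n * (L - 1) := by
                    rw [Finset.sum_const, Finset.card_univ, Fintype.card_fin, smul_eq_mul]
            have h2 : n * (L - 1) ≤ (p + 1) * (L - 1) := Nat.mul_le_mul_right _ hge
            have h3 : (p + 1) * L ≤ (p + 1) * (L - 1) := le_trans hα (le_trans hle h2)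
            have h4 : L ≤ L - 1 := Nat.le_of_mul_le_mul_left h3 (by omega)
            omega
          obtain ⟨β, hβ1, hβ2⟩ := hc α hex (p + 1) (by omega) hn hα
          exact ⟨β, fun j => (Stmt8Aux.mono_mem_iff lam ω L hwl hL1 (β j)).mp (hβ1 j), hβ2⟩
    intro α p hp hwt
    obtain ⟨β, hβ1, hβ2⟩ := claim p hp α hwt
    exact ⟨β, fun j => (Stmt8Aux.mono_mem_iff lam ω L hwl hL1 (β j)).mpr (hβ1 j), hβ2⟩
  refine ⟨⟨hnb, hbn⟩, ⟨fun h α _ p hp _ hwt => hnb h α p hp hwt, fun h => hbn (hcb h)⟩⟩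
end

section
/- Let Λ = ⟨1/λ₁,…,1/λₙ⟩ be the additive submonoid of ℚ_{≥0} generated by 1/λ₁,…,1/λₙ. If I(λ) is a normal ideal, then Λ is quasinormal. -/
open Finset

/-- A submonoid `S` of the nonnegative rationals is quasinormal if whenever `x ∈ S`
and `x ≥ p` for a positive natural number `p`, one can write `x = y₁ + ⋯ + y_p`
with each `yᵢ ∈ S` and `yᵢ ≥ 1`. -/
def Quasinormal (S : AddSubmonoid ℚ) : Prop :=
  ∀ x ∈ S, ∀ p : ℕ, 0 < p → (p : ℚ) ≤ x →
    ∃ y : Fin p → ℚ, (∀ i, y i ∈ S ∧ 1 ≤ y i) ∧ x = ∑ i, y i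

namespace Stmt10Aux

open MvPolynomial Finset

variable {K : Type*} [Field K] {n : ℕ}

/-- weight of an exponent vector -/
def wt (w1 : Fin n → ℕ) (b : Fin n →₀ ℕ) : ℕ := b.sum fun i e => e * w1 i

lemma wt_apply (w1 : Fin n → ℕ) (b : Fin n →₀ ℕ) : wt w1 b = ∑ i, b i * w1 i :=
  Finsupp.sum_fintype _ _ fun i => by simp

lemma wt_single (w1 : Fin n → ℕ) (i : Fin n) (e : ℕ) :
    wt w1 (Finsupp.single i e) = e * w1 i := by
  simp [wt, Finsupp.sum_single_index]

noncomputable def phi (w1 : Fin n → ℕ) :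
    MvPolynomial (Fin n) K →+* Polynomial (MvPolynomial (Fin n) K) :=
  eval₂Hom (Polynomial.C.comp C) fun i => Polynomial.monomial (w1 i) (X i)

lemma prod_polyMonomial {R : Type*} [CommSemiring R] {α : Type*} (s : Finset α) (d : α → ℕ)
    (r : α → R) :
    (∏ i ∈ s, Polynomial.monomial (d i) (r i)) =
      Polynomial.monomial (∑ i ∈ s, d i) (∏ i ∈ s, r i) := by
  classical
  induction s using Finset.cons_induction with
  | empty => simp
  | cons a s ha ih =>
      rw [Finset.prod_cons, Finset.sum_cons, Finset.prod_cons, ih,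
        Polynomial.monomial_mul_monomial]

lemma phi_monomial (w1 : Fin n → ℕ) (b : Fin n →₀ ℕ) (c : K) :
    phi w1 (monomial b c) = Polynomial.monomial (wt w1 b) (monomial b c) := by
  classical
  have h1 : phi w1 (monomial b c)
      = Polynomial.C (C c) * b.prod fun i e => (Polynomial.monomial (w1 i) (X i)) ^ e :=
    eval₂_monomial _ _
  rw [h1, Finsupp.prod]
  simp_rw [Polynomial.monomial_pow]
  rw [prod_polyMonomial, Polynomial.C_mul_monomial, monomial_eq, Finsupp.prod, wt, Finsupp.sum]
  have h2 : (∑ i ∈ b.support, w1 i * b i) = ∑ i ∈ b.support, b i * w1 i :=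
    Finset.sum_congr rfl fun i _ => mul_comm _ _
  rw [h2]

lemma phi_ne_zero (w1 : Fin n → ℕ) {x : MvPolynomial (Fin n) K} (hx : x ≠ 0) :
    phi w1 x ≠ 0 := by
  intro h0
  apply hx
  have hcomp : (Polynomial.evalRingHom (1 : MvPolynomial (Fin n) K)).comp (phi w1)
      = RingHom.id _ := by
    apply MvPolynomial.ringHom_ext <;> intro i <;>
      simp [phi, Polynomial.eval_monomial]
  calc x = (Polynomial.evalRingHom (1 : MvPolynomial (Fin n) K)) (phi w1 x) := by
        rw [← RingHom.comp_apply, hcomp]; rfl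
  _ = 0 := by rw [h0]; simp

lemma le_td_add {R : Type*} [Semiring R] {p q : Polynomial R} {c : ℕ∞}
    (hp : c ≤ p.trailingDegree) (hq : c ≤ q.trailingDegree) :
    c ≤ (p + q).trailingDegree := by
  refine Finset.le_min fun b hb => ?_
  rcases Finset.mem_union.mp (Polynomial.support_add hb) with h | h
  · exact hp.trans (Finset.min_le h)
  · exact hq.trans (Finset.min_le h)

noncomputable def Ocal (w1 : Fin n → ℕ) (c : ℕ∞) : Ideal (MvPolynomial (Fin n) K) where
  carrier := {f | c ≤ (phi w1 f).trailingDegree}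
  zero_mem' := by simp [Set.mem_setOf_eq]
  add_mem' := fun ha hb => by
    simpa [Set.mem_setOf_eq, map_add] using le_td_add ha hb
  smul_mem' := fun r f hf => by
    simp only [Set.mem_setOf_eq, smul_eq_mul, map_mul]
    exact le_trans (le_trans hf le_add_self) Polynomial.le_trailingDegree_mul

lemma mem_Ocal {w1 : Fin n → ℕ} {c : ℕ∞} {x : MvPolynomial (Fin n) K} :
    x ∈ Ocal w1 c ↔ c ≤ (phi w1 x).trailingDegree := Iff.rfl

lemma Ocal_mono {w1 : Fin n → ℕ} {c c' : ℕ∞} (h : c' ≤ c) :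
    (Ocal w1 c : Ideal (MvPolynomial (Fin n) K)) ≤ Ocal w1 c' :=
  fun _ hf => le_trans h hf

lemma Ocal_mul_le {w1 : Fin n → ℕ} {c d : ℕ∞} :
    (Ocal w1 c : Ideal (MvPolynomial (Fin n) K)) * Ocal w1 d ≤ Ocal w1 (c + d) :=
  Ideal.mul_le.mpr fun r hr s hs => by
    rw [mem_Ocal, map_mul]
    exact le_trans (add_le_add hr hs) Polynomial.le_trailingDegree_mul

lemma pow_le_Ocal {w1 : Fin n → ℕ} {c : ℕ∞} {J : Ideal (MvPolynomial (Fin n) K)}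
    (hJ : J ≤ Ocal w1 c) (k : ℕ) : J ^ k ≤ Ocal w1 (k • c) := by
  induction k with
  | zero => intro x _; rw [mem_Ocal]; simp
  | succ k ih =>
      rw [pow_succ, succ_nsmul]
      exact le_trans (Ideal.mul_le.mpr fun r hr s hs =>
        Ocal_mul_le (Ideal.mul_mem_mul (ih hr) (hJ hs))) le_rfl

lemma td_pow {R : Type*} [CommSemiring R] [NoZeroDivisors R] [Nontrivial R] (p : Polynomial R)
    (k : ℕ) : (p ^ k).trailingDegree = k • p.trailingDegree := by
  induction k with
  | zero => simp [Polynomial.trailingDegree_one, one_ne_zero]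
  | succ k ih => rw [pow_succ, Polynomial.trailingDegree_mul, ih, succ_nsmul]


lemma integral_mem_Ocal {L : ℕ} (hL : 0 < L) (w1 : Fin n → ℕ)
    {J : Ideal (MvPolynomial (Fin n) K)} (hJ : J ≤ Ocal w1 (L : ℕ∞))
    {x : MvPolynomial (Fin n) K} (hx : IsIntegralOverIdeal J x) :
    x ∈ Ocal w1 (L : ℕ∞) := by
  obtain ⟨m, hm, a, ha, heq⟩ := hx
  by_cases hx0 : x = 0
  · exact hx0 ▸ (Ocal w1 _).zero_mem
  by_contra hmem
  set e := (phi w1 x).natTrailingDegree with he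
  have hpx : phi w1 x ≠ 0 := phi_ne_zero w1 hx0
  have htd : (phi w1 x).trailingDegree = (e : ℕ∞) :=
    Polynomial.trailingDegree_eq_natTrailingDegree hpx
  have heL : e < L := by
    by_contra hle
    exact hmem (by rw [mem_Ocal, htd]; exact_mod_cast Nat.le_of_not_lt hle)
  have hLe : e ≤ L := le_of_lt heL
  have hxe : x ∈ Ocal w1 (e : ℕ∞) := by rw [mem_Ocal, htd]
  have hsum : x ^ m ∈ Ocal w1 ((m * e + (L - e) : ℕ) : ℕ∞) := by
    have hxm : x ^ m = -∑ k ∈ Finset.Icc 1 m, a k * x ^ (m - k) :=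
      eq_neg_of_add_eq_zero_left heq
    rw [hxm]
    refine neg_mem (Ideal.sum_mem _ fun k hk => ?_)
    obtain ⟨hk1, hkm⟩ := Finset.mem_Icc.mp hk
    have h1 : a k ∈ Ocal w1 ((k * L : ℕ) : ℕ∞) := by
      have h1' := pow_le_Ocal hJ k (ha k hk)
      have : (k • (L : ℕ∞)) = ((k * L : ℕ) : ℕ∞) := by
        rw [nsmul_eq_mul]; push_cast; ring
      rwa [this] at h1'
    have h2 : x ^ (m - k) ∈ Ocal w1 (((m - k) * e : ℕ) : ℕ∞) := by
      have h2' := pow_le_Ocal (le_refl (Ocal w1 (e : ℕ∞))) (m - k)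
        (Ideal.pow_mem_pow hxe (m - k))
      have : ((m - k) • (e : ℕ∞)) = (((m - k) * e : ℕ) : ℕ∞) := by
        rw [nsmul_eq_mul]; push_cast; ring
      rwa [this] at h2'
    have h3 : a k * x ^ (m - k) ∈ Ocal w1 (((k * L : ℕ) : ℕ∞) + (((m - k) * e : ℕ) : ℕ∞)) :=
      Ocal_mul_le (Ideal.mul_mem_mul h1 h2)
    refine Ocal_mono ?_ h3
    have hkey : m * e + (L - e) ≤ k * L + (m - k) * e := by
      have hb : e + (L - e) = L := Nat.add_sub_cancel' hLe
      have h1n : k * L + (m - k) * e = m * e + k * (L - e) := by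
        calc k * L + (m - k) * e = k * (e + (L - e)) + (m - k) * e := by rw [hb]
        _ = (k + (m - k)) * e + k * (L - e) := by ring
        _ = m * e + k * (L - e) := by rw [Nat.add_sub_cancel' hkm]
      have h2n : L - e ≤ k * (L - e) := Nat.le_mul_of_pos_left _ hk1
      calc m * e + (L - e) ≤ m * e + k * (L - e) := Nat.add_le_add_left h2n _
      _ = k * L + (m - k) * e := h1n.symm
    rw [← Nat.cast_add]
    exact_mod_cast hkey
  have htdm : (phi w1 (x ^ m)).trailingDegree = ((m * e : ℕ) : ℕ∞) := by
    rw [map_pow, td_pow, htd, nsmul_eq_mul]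
    push_cast; ring
  rw [mem_Ocal, htdm, Nat.cast_le] at hsum
  omega

lemma supp_wt_ge {L : ℕ} (w1 : Fin n → ℕ) {x : MvPolynomial (Fin n) K}
    (hx : x ∈ Ocal w1 (L : ℕ∞)) : ∀ b ∈ x.support, L ≤ wt w1 b := by
  classical
  intro b hb
  by_contra hlt
  push_neg at hlt
  have hc : (phi w1 x).coeff (wt w1 b) = 0 :=
    Polynomial.coeff_eq_zero_of_lt_trailingDegree
      (lt_of_lt_of_le (by exact_mod_cast hlt) hx)
  have hphi : phi w1 x
      = ∑ d ∈ x.support, Polynomial.monomial (wt w1 d) (monomial d (coeff d x)) := by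
    conv_lhs => rw [x.as_sum, map_sum]
    exact Finset.sum_congr rfl fun d _ => phi_monomial w1 d _
  rw [hphi, Polynomial.finset_sum_coeff] at hc
  have hc2 := congrArg (MvPolynomial.coeff b) hc
  rw [MvPolynomial.coeff_sum] at hc2
  simp only [Polynomial.coeff_monomial, apply_ite (MvPolynomial.coeff b),
    MvPolynomial.coeff_monomial, MvPolynomial.coeff_zero] at hc2
  rw [Finset.sum_eq_single_of_mem b hb (fun d _ hd => by simp [hd]), if_pos rfl,
    if_pos rfl] at hc2
  exact (MvPolynomial.mem_support_iff.mp hb) hc2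


def Sset (w1 : Fin n → ℕ) (L p : ℕ) : Set (Fin n →₀ ℕ) :=
  {b | ∃ f : Fin p → (Fin n →₀ ℕ), (∀ j, L ≤ wt w1 (f j)) ∧ b = ∑ j, f j}

/-- the monomial ideal M -/
noncomputable def Mid (K : Type*) [Field K] {n : ℕ} (w1 : Fin n → ℕ) (L : ℕ) :
    Ideal (MvPolynomial (Fin n) K) :=
  Ideal.span ((fun b => monomial b (1 : K)) '' {b | L ≤ wt w1 b})

lemma Mid_pow_le (w1 : Fin n → ℕ) (L : ℕ) (p : ℕ) (hp : 0 < p) :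
    (Mid K w1 L) ^ p ≤ Ideal.span ((fun b => monomial b (1 : K)) '' Sset w1 L p) := by
  induction p with
  | zero => omega
  | succ p ih =>
      by_cases hp0 : p = 0
      · subst hp0
        rw [pow_one]
        refine Ideal.span_mono (Set.image_mono fun b hb => ?_)
        exact ⟨fun _ => b, fun _ => hb, by simp⟩
      · have hppos : 0 < p := Nat.pos_of_ne_zero hp0
        rw [pow_succ]
        refine le_trans (Ideal.mul_mono (ih hppos) le_rfl) ?_
        rw [Mid, Ideal.span_mul_span']
        refine Ideal.span_le.mpr fun z hz => ?_
        obtain ⟨u, hu, v, hv, rfl⟩ := Set.mem_mul.mp hz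
        obtain ⟨s, ⟨f, hf, rfl⟩, rfl⟩ := hu
        obtain ⟨t, ht, rfl⟩ := hv
        refine Ideal.subset_span ⟨(∑ j, f j) + t, ?_, ?_⟩
        · refine ⟨Fin.snoc f t, fun j => ?_, ?_⟩
          · refine Fin.lastCases ?_ ?_ j
            · rw [Fin.snoc_last]; exact ht
            · intro i; rw [Fin.snoc_castSucc]; exact hf i
          · rw [Fin.sum_univ_castSucc]
            simp [Fin.snoc_last, Fin.snoc_castSucc]
        · rw [monomial_mul, one_mul]

lemma prod_pow_mem {R : Type*} [CommRing R] (J : Ideal R) {α : Type*} (s : Finset α)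
    (g : α → R) (m : α → ℕ) (hg : ∀ i ∈ s, g i ∈ J) :
    (∏ i ∈ s, g i ^ m i) ∈ J ^ (∑ i ∈ s, m i) := by
  classical
  induction s using Finset.cons_induction with
  | empty => simp [Ideal.one_eq_top]
  | cons a s ha ih =>
      rw [Finset.prod_cons, Finset.sum_cons, pow_add]
      exact Ideal.mul_mem_mul (Ideal.pow_mem_pow (hg a (Finset.mem_cons_self a s)) _)
        (ih fun i hi => hg i (Finset.mem_cons_of_mem hi))

lemma monomial_one_eq_prod (b : Fin n →₀ ℕ) :
    (monomial b (1 : K)) = ∏ i, X i ^ b i := by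
  rw [monomial_eq, C_1, one_mul, Finsupp.prod_fintype]
  intro i; exact pow_zero _


lemma Jlam_le_Ocal (lam w1 : Fin n → ℕ) (L : ℕ) (hw : ∀ i, lam i * w1 i = L) :
    Jlam K lam ≤ Ocal w1 (L : ℕ∞) := by
  rw [Jlam, Ideal.span_le]
  rintro _ ⟨i, rfl⟩
  show (L : ℕ∞) ≤ (phi w1 (X i ^ lam i)).trailingDegree
  rw [X_pow_eq_monomial, phi_monomial,
    Polynomial.trailingDegree_monomial
      (by simp [MvPolynomial.monomial_eq_zero] :
        (monomial (Finsupp.single i (lam i)) (1 : K)) ≠ 0),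
    wt_single, hw i]

lemma Ilam_le_Mid (lam w1 : Fin n → ℕ) (L : ℕ) (hL : 0 < L)
    (hw : ∀ i, lam i * w1 i = L) : Ilam K lam ≤ Mid K w1 L := by
  rw [Ilam, Ideal.span_le]
  intro x hx
  have hxO : x ∈ Ocal w1 (L : ℕ∞) :=
    integral_mem_Ocal hL w1 (Jlam_le_Ocal lam w1 L hw) hx
  rw [SetLike.mem_coe, Mid]
  exact mem_ideal_span_monomial_image.mpr fun b hb => ⟨b, supp_wt_ge w1 hxO b hb, le_rfl⟩

lemma chi_pow_mem (lam w1 : Fin n → ℕ) (L : ℕ) (hw : ∀ i, lam i * w1 i = L)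
    (A : Fin n →₀ ℕ) :
    (monomial A (1 : K)) ^ L ∈ Jlam K lam ^ (wt w1 A) := by
  rw [monomial_pow, one_pow, monomial_one_eq_prod]
  have hexp : ∀ i, (L • A) i = lam i * (A i * w1 i) := fun i => by
    rw [Finsupp.smul_apply, smul_eq_mul, ← hw i]; ring
  have hpr : (∏ i, X i ^ ((L • A) i) : MvPolynomial (Fin n) K)
      = ∏ i, (X i ^ lam i) ^ (A i * w1 i) := by
    refine Finset.prod_congr rfl fun i _ => ?_
    rw [hexp i, pow_mul]
  rw [hpr, wt_apply]
  exact prod_pow_mem _ _ _ _ fun i _ => Ideal.subset_span ⟨i, rfl⟩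

lemma Jlam_le_Ilam (lam : Fin n → ℕ) : Jlam K lam ≤ Ilam K lam := by
  intro g hg
  refine Ideal.subset_span ⟨1, one_pos, fun _ => -g, fun k hk => ?_, ?_⟩
  · obtain rfl : k = 1 := by simpa using hk
    simpa [pow_one] using neg_mem hg
  · simp [Finset.Icc_self]

/-- the rational degree map -/
def dQ (lam : Fin n → ℕ) : (Fin n →₀ ℕ) →+ ℚ where
  toFun b := ∑ i, (b i : ℚ) / (lam i : ℚ)
  map_zero' := by simp
  map_add' a b := by
    simp [Finsupp.add_apply, add_div, Finset.sum_add_distrib]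

lemma dQ_apply (lam : Fin n → ℕ) (b : Fin n →₀ ℕ) :
    dQ lam b = ∑ i, (b i : ℚ) / (lam i : ℚ) := rfl

lemma dQ_mem (lam : Fin n → ℕ) (b : Fin n →₀ ℕ) :
    dQ lam b ∈ AddSubmonoid.closure (Set.range fun i => (1 : ℚ) / (lam i : ℚ)) := by
  rw [dQ_apply]
  refine AddSubmonoid.sum_mem _ fun i _ => ?_
  have : ((b i : ℚ)) / (lam i : ℚ) = (b i) • ((1 : ℚ) / (lam i : ℚ)) := by
    rw [nsmul_eq_mul, mul_one_div]
  rw [this]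
  have hmem : (1 : ℚ) / (lam i : ℚ)
      ∈ AddSubmonoid.closure (Set.range fun i => (1 : ℚ) / (lam i : ℚ)) :=
    AddSubmonoid.subset_closure ⟨i, rfl⟩
  exact AddSubmonoid.nsmul_mem _ hmem (b i)

lemma wt_cast (lam w1 : Fin n → ℕ) (L : ℕ) (hlam : ∀ i, 0 < lam i)
    (hw : ∀ i, lam i * w1 i = L) (b : Fin n →₀ ℕ) :
    ((wt w1 b : ℕ) : ℚ) = (L : ℚ) * dQ lam b := by
  rw [wt_apply]
  push_cast
  rw [dQ_apply, Finset.mul_sum]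
  refine Finset.sum_congr rfl fun i _ => ?_
  have hlne : ((lam i : ℚ)) ≠ 0 := by
    exact_mod_cast (hlam i).ne'
  have hwq : ((w1 i : ℚ)) = (L : ℚ) / (lam i : ℚ) := by
    rw [eq_div_iff hlne, mul_comm]
    exact_mod_cast hw i
  rw [hwq]
  field_simp

lemma closure_repr {v : Fin n → ℚ} {x : ℚ}
    (hx : x ∈ AddSubmonoid.closure (Set.range v)) :
    ∃ a : Fin n → ℕ, x = ∑ i, (a i : ℚ) * v i := by
  induction hx using AddSubmonoid.closure_induction with
  | mem z hz =>
      classical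
      obtain ⟨i, hi⟩ := hz
      refine ⟨fun j => if j = i then 1 else 0, ?_⟩
      rw [← hi]
      simp
  | zero => exact ⟨fun _ => 0, by simp⟩
  | add z w _ _ hz hw =>
      obtain ⟨az, haz⟩ := hz
      obtain ⟨aw, haw⟩ := hw
      refine ⟨fun i => az i + aw i, ?_⟩
      rw [haz, haw, ← Finset.sum_add_distrib]
      push_cast
      exact Finset.sum_congr rfl fun i _ => by ring

end Stmt10Aux

open Stmt10Aux

theorem stmt10 {K : Type*} [Field K] {n : ℕ} (lam : Fin n → ℕ) (hlam : ∀ i, 0 < lam i)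
    (Λ : AddSubmonoid ℚ)
    (hΛ : Λ = AddSubmonoid.closure (Set.range fun i => (1 : ℚ) / (lam i : ℚ)))
    (h : IsNormalIdeal (Ilam K lam)) :
    Quasinormal Λ := by
  subst hΛ
  intro x hx p hp hpx
  classical
  set L := ∏ i, lam i with hLdef
  have hLpos : 0 < L := Finset.prod_pos fun i _ => hlam i
  set w1 : Fin n → ℕ := fun i => L / lam i with hw1
  have hw : ∀ i, lam i * w1 i = L := fun i =>
    Nat.mul_div_cancel' (Finset.dvd_prod_of_mem lam (Finset.mem_univ i))
  obtain ⟨a, hxa⟩ := closure_repr hx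
  set A : Fin n →₀ ℕ := Finsupp.equivFunOnFinite.symm a with hA
  have hAi : ∀ i, A i = a i := fun _ => rfl
  have hdA : dQ lam A = x := by
    rw [dQ_apply, hxa]
    exact Finset.sum_congr rfl fun i _ => by rw [hAi i, mul_one_div]
  have hwA : p * L ≤ wt w1 A := by
    have hq : ((p * L : ℕ) : ℚ) ≤ ((wt w1 A : ℕ) : ℚ) := by
      rw [wt_cast lam w1 L hlam hw A, hdA]
      push_cast
      rw [mul_comm]
      exact mul_le_mul_of_nonneg_left hpx (Nat.cast_nonneg L)
    exact_mod_cast hq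
  set χ := MvPolynomial.monomial A (1 : K) with hχ
  have hχL : χ ^ L ∈ Jlam K lam ^ (p * L) :=
    Ideal.pow_le_pow_right hwA (chi_pow_mem lam w1 L hw A)
  have hχL2 : χ ^ L ∈ (Ilam K lam ^ p) ^ L := by
    rw [← pow_mul]
    exact Ideal.pow_right_mono (Jlam_le_Ilam lam) (p * L) hχL
  have hint : IsIntegralOverIdeal (Ilam K lam ^ p) χ := by
    refine ⟨L, hLpos, fun k => if k = L then -(χ ^ L) else 0, fun k hk => ?_, ?_⟩
    · show (if k = L then -(χ ^ L) else 0) ∈ (Ilam K lam ^ p) ^ k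
      by_cases hkL : k = L
      · subst hkL; rw [if_pos rfl]; exact neg_mem hχL2
      · rw [if_neg hkL]; exact zero_mem _
    · have hterm : ∀ k ∈ Finset.Icc 1 L,
          (if k = L then -(χ ^ L) else 0) * χ ^ (L - k)
            = if k = L then -(χ ^ L) else 0 := by
        intro k _
        by_cases hkL : k = L
        · subst hkL; simp
        · simp [hkL]
      rw [Finset.sum_congr rfl hterm, Finset.sum_ite_eq' (Finset.Icc 1 L) L]
      rw [if_pos (Finset.mem_Icc.mpr ⟨hLpos, le_rfl⟩)]
      ring
  have hχmem : χ ∈ Ilam K lam ^ p := h p hp χ hint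
  have hMid : χ ∈ Mid K w1 L ^ p :=
    Ideal.pow_right_mono (Ilam_le_Mid lam w1 L hLpos hw) p hχmem
  have hspan := Mid_pow_le w1 L p hp hMid
  have hAsupp : A ∈ χ.support := by
    rw [hχ]
    simp [MvPolynomial.support_monomial]
  obtain ⟨s, hsS, hsA⟩ := MvPolynomial.mem_ideal_span_monomial_image.mp hspan A hAsupp
  obtain ⟨f, hf, rfl⟩ := hsS
  have hsplit : (A - ∑ j, f j) + ∑ j, f j = A := tsub_add_cancel_of_le hsA
  set j0 : Fin p := ⟨0, hp⟩ with hj0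
  refine ⟨fun j => dQ lam (f j) + if j = j0 then dQ lam (A - ∑ j', f j') else 0,
    fun j => ⟨?_, ?_⟩, ?_⟩
  · refine AddSubmonoid.add_mem _ (dQ_mem lam (f j)) ?_
    by_cases hj : j = j0
    · rw [if_pos hj]; exact dQ_mem lam _
    · rw [if_neg hj]; exact zero_mem _
  · have hq : ((L : ℕ) : ℚ) ≤ ((wt w1 (f j) : ℕ) : ℚ) := by exact_mod_cast hf j
    rw [wt_cast lam w1 L hlam hw] at hq
    have hLq : (0 : ℚ) < (L : ℚ) := by exact_mod_cast hLpos
    have h1 : (1 : ℚ) ≤ dQ lam (f j) := by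
      have hm : (L : ℚ) * 1 ≤ (L : ℚ) * dQ lam (f j) := by rw [mul_one]; exact hq
      exact le_of_mul_le_mul_left hm hLq
    have h2 : (0 : ℚ) ≤ (if j = j0 then dQ lam (A - ∑ j', f j') else 0) := by
      split
      · rw [dQ_apply]
        positivity
      · exact le_rfl
    show (1 : ℚ) ≤ dQ lam (f j) + if j = j0 then dQ lam (A - ∑ j', f j') else 0
    linarith
  · show x = ∑ j, (dQ lam (f j) + if j = j0 then dQ lam (A - ∑ j', f j') else 0)
    rw [Finset.sum_add_distrib, Finset.sum_ite_eq' Finset.univ j0,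
      if_pos (Finset.mem_univ j0)]
    have hms : ∑ j, dQ lam (f j) = dQ lam (∑ j, f j) := (map_sum _ _ _).symm
    rw [hms, ← AddMonoidHom.map_add, add_comm (∑ j, f j), hsplit, hdA]
end

section
/- Suppose λ₁,…,λₙ are pairwise relatively prime positive integers and let Λ = ⟨1/λ₁,…,1/λₙ⟩ be the additive submonoid of ℚ_{≥0} generated by 1/λ₁,…,1/λₙ. Then I(λ) is a normal ideal if and only if Λ is quasinormal. -/
open Finset

set_option maxHeartbeats 1000000

namespace Stmt11Aux

variable {K : Type*} [Field K] {n : ℕ}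

/-- the weight of an exponent vector -/
def vwt (lam : Fin n → ℕ) (a : Fin n →₀ ℕ) : ℚ := ∑ i, (a i : ℚ) / (lam i : ℚ)

lemma vwt_nonneg (lam : Fin n → ℕ) (a : Fin n →₀ ℕ) : 0 ≤ vwt lam a :=
  Finset.sum_nonneg fun i _ => div_nonneg (by positivity) (by positivity)

lemma vwt_add (lam : Fin n → ℕ) (a b : Fin n →₀ ℕ) :
    vwt lam (a + b) = vwt lam a + vwt lam b := by
  simp [vwt, Finsupp.add_apply, add_div, Finset.sum_add_distrib]

lemma vwt_zero (lam : Fin n → ℕ) : vwt lam 0 = 0 := by simp [vwt]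

lemma vwt_smul (lam : Fin n → ℕ) (r : ℕ) (a : Fin n →₀ ℕ) :
    vwt lam (r • a) = r * vwt lam a := by
  induction r with
  | zero => simp [vwt_zero]
  | succ k ih => rw [succ_nsmul, vwt_add, ih]; push_cast; ring

lemma vwt_single (lam : Fin n → ℕ) (i : Fin n) (k : ℕ) :
    vwt lam (Finsupp.single i k) = (k : ℚ) / (lam i : ℚ) := by
  rw [vwt, Finset.sum_eq_single i]
  · simp
  · intro j _ hj; simp [Finsupp.single_apply, Ne.symm hj]
  · simp

/-- the monomial ideal of all polynomials all of whose exponents have weight `≥ c` -/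
def Mq (lam : Fin n → ℕ) (c : ℚ) : Ideal (MvPolynomial (Fin n) K) where
  carrier := {f | ∀ a ∈ f.support, c ≤ vwt lam a}
  zero_mem' := by simp
  add_mem' := by
    intro f g hf hg a ha
    rcases Finset.mem_union.mp (Finsupp.support_add ha) with h | h
    exacts [hf a h, hg a h]
  smul_mem' := by
    intro r f hf a ha
    rw [smul_eq_mul] at ha
    obtain ⟨b, hb, c, hc, rfl⟩ := Finset.mem_add.mp (MvPolynomial.support_mul r f ha)
    rw [vwt_add]
    have := hf c hc
    have := vwt_nonneg lam b
    linarith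

lemma mem_Mq {lam : Fin n → ℕ} {c : ℚ} {f : MvPolynomial (Fin n) K} :
    f ∈ Mq lam c ↔ ∀ a ∈ f.support, c ≤ vwt lam a := Iff.rfl


variable (lam : Fin n → ℕ)

/-- the order used for the leading-term argument -/
def tau (a : Fin n →₀ ℕ) : ℚ ×ₗ Lex (Fin n →₀ ℕ) := toLex (vwt lam a, toLex a)

lemma tau_add (a b : Fin n →₀ ℕ) : tau lam (a + b) = tau lam a + tau lam b := by
  unfold tau
  rw [vwt_add]
  rfl

lemma tau_inj : Function.Injective (tau lam) := by
  intro a b hab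
  have := congrArg (fun x => (ofLex x).2) hab
  simpa [tau] using this

lemma tau_lt_first {a b : Fin n →₀ ℕ} (h : vwt lam a < vwt lam b) : tau lam a < tau lam b :=
  Prod.Lex.left _ _ h

lemma vwt_le_of_tau_le {a b : Fin n →₀ ℕ} (h : tau lam a ≤ tau lam b) :
    vwt lam a ≤ vwt lam b := by
  by_contra hc
  exact absurd (tau_lt_first lam (lt_of_not_ge hc)) (not_lt.mpr h)

/-- if a, b are minimizers of tau on supports of f, g then coeff of a+b in f*g is the product -/
lemma coeff_mul_tmin {f g : MvPolynomial (Fin n) K} {a b : Fin n →₀ ℕ}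
    (ha : ∀ c ∈ f.support, tau lam a ≤ tau lam c)
    (hb : ∀ c ∈ g.support, tau lam b ≤ tau lam c) :
    MvPolynomial.coeff (a + b) (f * g) = MvPolynomial.coeff a f * MvPolynomial.coeff b g := by
  classical
  rw [MvPolynomial.coeff_mul]
  rw [Finset.sum_eq_single (a, b)]
  · intro p hp hne
    by_contra h0
    have hp1 : p.1 ∈ f.support := by
      rw [MvPolynomial.mem_support_iff]; intro h; apply h0; rw [h, zero_mul]
    have hp2 : p.2 ∈ g.support := by
      rw [MvPolynomial.mem_support_iff]; intro h; apply h0; rw [h, mul_zero]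
    have hsum : p.1 + p.2 = a + b := Finset.HasAntidiagonal.mem_antidiagonal.mp hp
    have h1 := ha _ hp1
    have h2 := hb _ hp2
    have : tau lam p.1 = tau lam a := by
      by_contra hne1
      have : tau lam a < tau lam p.1 := lt_of_le_of_ne h1 (Ne.symm hne1)
      have : tau lam a + tau lam b < tau lam p.1 + tau lam p.2 :=
        add_lt_add_of_lt_of_le this h2
      rw [← tau_add, ← tau_add, hsum] at this
      exact lt_irrefl _ this
    have hpa : p.1 = a := tau_inj lam this
    have hpb : p.2 = b := by
      rw [hpa] at hsum
      exact add_left_cancel hsum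
    exact hne (Prod.ext hpa hpb)
  · intro h
    exact absurd ((Finset.HasAntidiagonal.mem_antidiagonal (a := (a, b))).mpr rfl) h

lemma coeff_pow_tmin {f : MvPolynomial (Fin n) K} {a : Fin n →₀ ℕ}
    (ha : ∀ c ∈ f.support, tau lam a ≤ tau lam c) (r : ℕ) :
    MvPolynomial.coeff (r • a) (f ^ r) = MvPolynomial.coeff a f ^ r ∧
      (∀ c ∈ (f ^ r).support, tau lam (r • a) ≤ tau lam c) := by
  classical
  induction r with
  | zero => simp [MvPolynomial.coeff_one]
  | succ m ih =>
      have hmin : ∀ c ∈ (f ^ m).support, tau lam (m • a) ≤ tau lam c := ih.2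
      constructor
      · rw [pow_succ', succ_nsmul']
        rw [coeff_mul_tmin lam ha hmin, ih.1, pow_succ']
      · intro c hc
        rw [pow_succ'] at hc
        obtain ⟨c1, hc1, c2, hc2, rfl⟩ := Finset.mem_add.mp (MvPolynomial.support_mul _ _ hc)
        rw [succ_nsmul', tau_add, tau_add]
        exact add_le_add (ha _ hc1) (hmin _ hc2)


lemma Mq_mul {c d : ℚ} {f g : MvPolynomial (Fin n) K}
    (hf : f ∈ Mq lam c) (hg : g ∈ Mq lam d) : f * g ∈ Mq lam (c + d) := by
  rw [mem_Mq] at *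
  intro a ha
  obtain ⟨b, hb, e, he, rfl⟩ := Finset.mem_add.mp (MvPolynomial.support_mul f g ha)
  rw [vwt_add]
  exact add_le_add (hf b hb) (hg e he)

lemma one_mem_Mq : (1 : MvPolynomial (Fin n) K) ∈ Mq lam 0 := by
  rw [mem_Mq]
  intro a ha
  classical
  rcases eq_or_ne a 0 with rfl | h
  · simp [vwt_zero]
  · have := MvPolynomial.mem_support_iff.mp ha
    simp [MvPolynomial.coeff_one, Ne.symm h] at this

lemma Mq_pow {c : ℚ} {f : MvPolynomial (Fin n) K} (hf : f ∈ Mq lam c) (k : ℕ) :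
    f ^ k ∈ Mq lam (k * c) := by
  induction k with
  | zero => simpa using one_mem_Mq lam
  | succ m ih =>
      have := Mq_mul lam hf ih
      rw [← pow_succ'] at this
      convert this using 2
      push_cast; ring

lemma pow_le_Mq {c : ℚ} {I : Ideal (MvPolynomial (Fin n) K)} (hI : I ≤ Mq lam c) (k : ℕ) :
    I ^ k ≤ Mq lam (k * c) := by
  induction k with
  | zero =>
      intro f _
      rw [mem_Mq]
      intro a _
      simpa using vwt_nonneg lam a
  | succ m ih =>
      rw [pow_succ]
      refine (Ideal.mul_le.mpr ?_)
      intro r hr s hs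
      have := Mq_mul lam (ih hr) (hI hs)
      convert this using 2
      push_cast; ring


lemma intOfPow {A : Type*} [CommRing A] {I : Ideal A} {x : A} {L : ℕ} (hL : 0 < L)
    (h : x ^ L ∈ I ^ L) : IsIntegralOverIdeal I x := by
  classical
  refine ⟨L, hL, fun k => if k = L then -(x ^ L) else 0, ?_, ?_⟩
  · intro k hk
    by_cases hkL : k = L
    · simp only [hkL, if_pos rfl]
      exact neg_mem h
    · simp [hkL]
  · rw [Finset.sum_eq_single L]
    · simp
    · intro k hk hkL; simp [hkL]
    · intro h'; exact absurd (Finset.mem_Icc.mpr ⟨hL, le_refl L⟩) h'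

lemma prod_mem_pow {A : Type*} [CommRing A] {I : Ideal A} {ι : Type*}
    (s : Finset ι) (f : ι → A) (c : ι → ℕ) (h : ∀ i ∈ s, f i ∈ I ^ c i) :
    (∏ i ∈ s, f i) ∈ I ^ (∑ i ∈ s, c i) := by
  classical
  induction s using Finset.induction_on with
  | empty => simp [Ideal.one_eq_top]
  | @insert a s' hnotmem ih =>
      rw [Finset.prod_insert hnotmem, Finset.sum_insert hnotmem, pow_add]
      exact Ideal.mul_mem_mul (h a (Finset.mem_insert_self a s'))
        (ih fun i hi => h i (Finset.mem_insert_of_mem hi))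

lemma prod_monomial {ι : Type*} (s : Finset ι) (b : ι → (Fin n →₀ ℕ)) :
    (∏ j ∈ s, (MvPolynomial.monomial (b j) (1 : K))) =
      MvPolynomial.monomial (∑ j ∈ s, b j) (1 : K) := by
  classical
  induction s using Finset.induction_on with
  | empty => simp
  | @insert a s' hnotmem ih =>
      rw [Finset.prod_insert hnotmem, Finset.sum_insert hnotmem, ih,
        MvPolynomial.monomial_mul, one_mul]

lemma monomial_eq_prod_pow (a : Fin n →₀ ℕ) :
    (MvPolynomial.monomial a (1 : K)) = ∏ i, MvPolynomial.X i ^ a i := by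
  rw [MvPolynomial.monomial_eq, MvPolynomial.C_1, one_mul]
  exact Finsupp.prod_fintype _ _ (fun i => pow_zero _)


lemma X_pow_mem_Jlam (i : Fin n) : (MvPolynomial.X i : MvPolynomial (Fin n) K) ^ lam i ∈ Jlam K lam :=
  Ideal.subset_span ⟨i, rfl⟩

lemma monomial_pow_mem (hlam : ∀ i, 0 < lam i) {a : Fin n →₀ ℕ} {m : ℕ}
    (h : (m : ℚ) ≤ vwt lam a) :
    (MvPolynomial.monomial a (1 : K)) ^ (∏ i, lam i) ∈ (Jlam K lam) ^ (m * ∏ i, lam i) := by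
  classical
  set L := ∏ i, lam i with hLdef
  have hdvd : ∀ i, lam i ∣ L := fun i => Finset.dvd_prod_of_mem _ (Finset.mem_univ i)
  have hlamQ : ∀ i, (lam i : ℚ) ≠ 0 := fun i => Nat.cast_ne_zero.mpr (hlam i).ne'
  set c : Fin n → ℕ := fun i => (L / lam i) * a i with hcdef
  have key : (MvPolynomial.monomial a (1 : K)) ^ L = ∏ i, (MvPolynomial.X i ^ lam i) ^ c i := by
    rw [MvPolynomial.monomial_pow, one_pow, monomial_eq_prod_pow]
    refine Finset.prod_congr rfl fun i _ => ?_
    rw [← pow_mul]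
    congr 1
    rw [Finsupp.smul_apply, smul_eq_mul, hcdef]
    rw [← mul_assoc, Nat.mul_div_cancel' (hdvd i)]
  rw [key]
  have hmem : (∏ i, (MvPolynomial.X i ^ lam i : MvPolynomial (Fin n) K) ^ c i) ∈
      (Jlam K lam) ^ (∑ i, c i) :=
    prod_mem_pow _ _ _ fun i _ => Ideal.pow_mem_pow (X_pow_mem_Jlam lam i) _
  have hle : m * L ≤ ∑ i, c i := by
    have hcast : ((∑ i, c i : ℕ) : ℚ) = (L : ℚ) * vwt lam a := by
      push_cast
      rw [vwt, Finset.mul_sum]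
      refine Finset.sum_congr rfl fun i _ => ?_
      show ((c i : ℕ) : ℚ) = (L : ℚ) * ((a i : ℚ) / (lam i : ℚ))
      calc ((c i : ℕ) : ℚ) = ((L / lam i : ℕ) : ℚ) * ((a i : ℕ) : ℚ) := by
            rw [hcdef]; push_cast; ring
        _ = (L : ℚ) / (lam i : ℚ) * ((a i : ℕ) : ℚ) := by
            rw [Nat.cast_div (hdvd i) (hlamQ i)]
        _ = (L : ℚ) * ((a i : ℚ) / (lam i : ℚ)) := by ring
    have : ((m * L : ℕ) : ℚ) ≤ ((∑ i, c i : ℕ) : ℚ) := by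
      rw [hcast]
      push_cast
      calc (m : ℚ) * L ≤ vwt lam a * L := by
            have hL0 : (0:ℚ) ≤ (L:ℚ) := Nat.cast_nonneg _
            exact mul_le_mul_of_nonneg_right h hL0
        _ = (L : ℚ) * vwt lam a := mul_comm _ _
    exact_mod_cast this
  exact Ideal.pow_le_pow_right hle hmem


lemma Mq_integrally_closed {c : ℚ} {I : Ideal (MvPolynomial (Fin n) K)}
    (hI : I ≤ Mq lam c) {f : MvPolynomial (Fin n) K}
    (hf : IsIntegralOverIdeal I f) : f ∈ Mq lam c := by
  classical
  obtain ⟨r, hr, u, hu, heq⟩ := hf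
  by_cases hf0 : f = 0
  · rw [hf0]; exact (Mq lam c).zero_mem
  have hne : f.support.Nonempty := MvPolynomial.support_nonempty.mpr hf0
  obtain ⟨a, has, hamin⟩ := Finset.exists_min_image f.support (tau lam) hne
  -- f ∈ Mq (vwt a)
  have hfa : f ∈ Mq lam (vwt lam a) :=
    mem_Mq.mpr fun b hb => vwt_le_of_tau_le lam (hamin b hb)
  -- suffices c ≤ vwt lam a
  suffices hca : c ≤ vwt lam a by
    exact mem_Mq.mpr fun b hb => le_trans hca (vwt_le_of_tau_le lam (hamin b hb))
  by_contra hca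
  push_neg at hca
  have hcoeffpow := coeff_pow_tmin lam hamin r
  have hc1 : MvPolynomial.coeff (r • a) (f ^ r) ≠ 0 := by
    rw [hcoeffpow.1]
    exact pow_ne_zero _ (MvPolynomial.mem_support_iff.mp has)
  -- coefficient of each u k * f^(r-k) at r•a is 0
  have hc2 : ∀ k ∈ Finset.Icc 1 r, MvPolynomial.coeff (r • a) (u k * f ^ (r - k)) = 0 := by
    intro k hk
    obtain ⟨hk1, hkr⟩ := Finset.mem_Icc.mp hk
    by_contra h0
    have hmemsupp : r • a ∈ (u k * f ^ (r - k)).support := MvPolynomial.mem_support_iff.mpr h0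
    have hmem : u k * f ^ (r - k) ∈ Mq lam ((k : ℚ) * c + ((r - k : ℕ) : ℚ) * vwt lam a) :=
      Mq_mul lam (pow_le_Mq lam hI k (hu k hk)) (Mq_pow lam hfa (r - k))
    have hineq := mem_Mq.mp hmem _ hmemsupp
    rw [vwt_smul] at hineq
    have hcast : ((r - k : ℕ) : ℚ) = (r : ℚ) - (k : ℚ) := by
      rw [Nat.cast_sub hkr]
    rw [hcast] at hineq
    have hk0 : (0 : ℚ) < (k : ℚ) := by exact_mod_cast hk1
    nlinarith [hineq, hca, hk0]
  have : MvPolynomial.coeff (r • a) (f ^ r + ∑ k ∈ Finset.Icc 1 r, u k * f ^ (r - k)) = 0 := by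
    rw [heq, MvPolynomial.coeff_zero]
  rw [MvPolynomial.coeff_add, MvPolynomial.coeff_sum] at this
  rw [Finset.sum_eq_zero hc2, add_zero] at this
  exact hc1 this


section
variable (hlam : ∀ i, 0 < lam i)
include hlam

lemma Lpos : 0 < ∏ i, lam i := Finset.prod_pos fun i _ => hlam i

lemma Jlam_le_Mq1 : Jlam K lam ≤ Mq lam 1 := by
  rw [Jlam, Ideal.span_le]
  rintro x ⟨i, rfl⟩
  rw [SetLike.mem_coe, mem_Mq]
  intro a ha
  rw [MvPolynomial.support_X_pow] at ha
  rw [Finset.mem_singleton] at ha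
  subst ha
  rw [vwt_single]
  rw [div_self (Nat.cast_ne_zero.mpr (hlam i).ne')]

lemma monomial_integral {a : Fin n →₀ ℕ} {m : ℕ} (h : (m : ℚ) ≤ vwt lam a) :
    IsIntegralOverIdeal ((Jlam K lam) ^ m) (MvPolynomial.monomial a (1 : K)) := by
  refine intOfPow (Lpos lam hlam) ?_
  have hm := monomial_pow_mem lam hlam (K := K) h
  rwa [pow_mul] at hm

lemma Mq1_le_Ilam : (Mq lam 1 : Ideal (MvPolynomial (Fin n) K)) ≤ Ilam K lam := by
  intro f hf
  rw [← MvPolynomial.support_sum_monomial_coeff f]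
  refine Ideal.sum_mem _ fun a ha => ?_
  have h1 : (MvPolynomial.monomial a (MvPolynomial.coeff a f)) =
      MvPolynomial.C (MvPolynomial.coeff a f) * MvPolynomial.monomial a 1 := by
    rw [MvPolynomial.C_mul_monomial, mul_one]
  rw [h1]
  refine Ideal.mul_mem_left _ _ (Ideal.subset_span ?_)
  have hva := mem_Mq.mp hf a ha
  have : ((1 : ℕ) : ℚ) ≤ vwt lam a := by exact_mod_cast hva
  have hint := monomial_integral (K := K) lam hlam this
  rw [pow_one] at hint
  exact hint

omit hlam in
lemma Jlam_le_Ilam : Jlam K lam ≤ Ilam K lam := by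
  rw [Jlam, Ideal.span_le]
  rintro x ⟨i, rfl⟩
  refine Ideal.subset_span ?_
  refine ⟨1, one_pos, fun _ => -(MvPolynomial.X i ^ lam i), fun k hk => ?_, ?_⟩
  · have hk1 : k = 1 := by
      have := Finset.mem_Icc.mp hk
      omega
    subst hk1
    rw [pow_one]
    exact neg_mem (Ideal.subset_span ⟨i, rfl⟩)
  · rw [Finset.Icc_self, Finset.sum_singleton]
    simp

lemma Ilam_eq_Mq1 : Ilam K lam = (Mq lam 1 : Ideal (MvPolynomial (Fin n) K)) := by
  refine le_antisymm ?_ (Mq1_le_Ilam lam hlam)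
  rw [Ilam, Ideal.span_le]
  intro x hx
  exact Mq_integrally_closed lam (Jlam_le_Mq1 lam hlam) hx


end

/-- `a` decomposes into `p` parts each of weight at least 1, plus remainder -/
def Dd (p : ℕ) (a : Fin n →₀ ℕ) : Prop :=
  ∃ b : Fin p → (Fin n →₀ ℕ), (∀ j, 1 ≤ vwt lam (b j)) ∧ ∑ j, b j ≤ a

lemma Dd_mono {p : ℕ} {a a' : Fin n →₀ ℕ} (h : Dd lam p a) (hle : a ≤ a') : Dd lam p a' := by
  obtain ⟨b, hb, hsum⟩ := h
  exact ⟨b, hb, le_trans hsum hle⟩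

def Np (p : ℕ) : Ideal (MvPolynomial (Fin n) K) where
  carrier := {f | ∀ a ∈ f.support, Dd lam p a}
  zero_mem' := by simp
  add_mem' := by
    intro f g hf hg a ha
    rcases Finset.mem_union.mp (Finsupp.support_add ha) with h | h
    exacts [hf a h, hg a h]
  smul_mem' := by
    intro r f hf a ha
    rw [smul_eq_mul] at ha
    obtain ⟨b, _, c, hc, rfl⟩ := Finset.mem_add.mp (MvPolynomial.support_mul r f ha)
    exact Dd_mono lam (hf c hc) le_add_self

lemma mem_Np {p : ℕ} {f : MvPolynomial (Fin n) K} :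
    f ∈ Np (K := K) lam p ↔ ∀ a ∈ f.support, Dd lam p a := Iff.rfl

lemma Mq1_pow_le_Np (p : ℕ) : (Mq lam 1 : Ideal (MvPolynomial (Fin n) K)) ^ p ≤ Np lam p := by
  induction p with
  | zero =>
      intro f _
      rw [mem_Np]
      intro a _
      exact ⟨fun j => 0, fun j => absurd j.2 (by omega), by simp⟩
  | succ q ih =>
      rw [pow_succ]
      refine Ideal.mul_le.mpr fun r hr s hs => ?_
      rw [mem_Np]
      intro a ha
      obtain ⟨ar, har, as, has, rfl⟩ := Finset.mem_add.mp (MvPolynomial.support_mul r s ha)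
      obtain ⟨b, hb, hsum⟩ := (mem_Np lam).mp (ih hr) ar har
      refine ⟨Fin.cons as b, ?_, ?_⟩
      · intro j
        refine Fin.cases ?_ ?_ j
        · rw [Fin.cons_zero]
          exact mem_Mq.mp hs as has
        · intro j'
          rw [Fin.cons_succ]
          exact hb j'
      · rw [Fin.sum_cons]
        rw [add_comm ar as]
        exact add_le_add le_rfl hsum

lemma monomial_mem_Mq1_pow {p : ℕ} {a : Fin n →₀ ℕ} (h : Dd lam p a) :
    MvPolynomial.monomial a (1 : K) ∈ (Mq lam 1 : Ideal (MvPolynomial (Fin n) K)) ^ p := by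
  classical
  obtain ⟨b, hb, hsum⟩ := h
  have ha : a = (∑ j, b j) + (a - ∑ j, b j) := (add_tsub_cancel_of_le hsum).symm
  have : MvPolynomial.monomial a (1 : K) =
      MvPolynomial.monomial (∑ j, b j) (1 : K) *
        MvPolynomial.monomial (a - ∑ j, b j) (1 : K) := by
    rw [MvPolynomial.monomial_mul, one_mul, ← ha]
  rw [this]
  refine Ideal.mul_mem_right _ _ ?_
  rw [← prod_monomial]
  have := prod_mem_pow (I := (Mq lam 1 : Ideal (MvPolynomial (Fin n) K))) Finset.univ
    (fun j => MvPolynomial.monomial (b j) (1 : K)) (fun _ => 1) ?_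
  · simpa using this
  · intro j _
    rw [pow_one, mem_Mq]
    intro c hc
    rw [MvPolynomial.support_monomial] at hc
    rw [if_neg one_ne_zero] at hc
    rw [Finset.mem_singleton] at hc
    subst hc
    exact hb j

lemma Dd_of_monomial_mem {p : ℕ} {a : Fin n →₀ ℕ}
    (h : MvPolynomial.monomial a (1 : K) ∈ (Mq lam 1 : Ideal (MvPolynomial (Fin n) K)) ^ p) :
    Dd lam p a := by
  classical
  have := Mq1_pow_le_Np (K := K) lam p h
  refine (mem_Np lam).mp this a ?_
  rw [MvPolynomial.support_monomial, if_neg one_ne_zero]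
  exact Finset.mem_singleton_self a


lemma vwt_sum {ι : Type*} (s : Finset ι) (b : ι → (Fin n →₀ ℕ)) :
    vwt lam (∑ j ∈ s, b j) = ∑ j ∈ s, vwt lam (b j) := by
  classical
  induction s using Finset.induction_on with
  | empty => simp [vwt_zero]
  | @insert a s' hne ih =>
      rw [Finset.sum_insert hne, Finset.sum_insert hne, vwt_add, ih]

lemma mem_Lambda (Λ : AddSubmonoid ℚ)
    (hΛ : Λ = AddSubmonoid.closure (Set.range fun i => (1 : ℚ) / (lam i : ℚ)))
    (x : ℚ) : x ∈ Λ ↔ ∃ a : Fin n →₀ ℕ, x = vwt lam a := by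
  subst hΛ
  constructor
  · intro hx
    refine AddSubmonoid.closure_induction ?_ ?_ ?_ hx
    · rintro y ⟨i, rfl⟩
      exact ⟨Finsupp.single i 1, by rw [vwt_single]; norm_num⟩
    · exact ⟨0, (vwt_zero lam).symm⟩
    · rintro y z _ _ ⟨a, rfl⟩ ⟨b, rfl⟩
      exact ⟨a + b, (vwt_add lam a b).symm⟩
  · rintro ⟨a, rfl⟩
    rw [vwt]
    refine AddSubmonoid.sum_mem _ fun i _ => ?_
    have : (a i : ℚ) / (lam i : ℚ) = (a i) • ((1 : ℚ) / (lam i : ℚ)) := by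
      rw [nsmul_eq_mul, mul_one_div]
    rw [this]
    exact AddSubmonoid.nsmul_mem _ (AddSubmonoid.subset_closure (Set.mem_range.mpr ⟨i, rfl⟩)) _

lemma vwt_eq_sum_prod (hlam : ∀ i, 0 < lam i) (c : Fin n →₀ ℕ) :
    ((∑ i, c i * ∏ j ∈ Finset.univ.erase i, lam j : ℕ) : ℚ) = vwt lam c * (∏ i, lam i : ℕ) := by
  push_cast
  rw [vwt, Finset.sum_mul]
  refine Finset.sum_congr rfl fun i _ => ?_
  have hL : ((∏ j, lam j : ℕ) : ℚ) = (lam i : ℚ) * ((∏ j ∈ Finset.univ.erase i, lam j : ℕ) : ℚ) := by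
    rw [← Nat.cast_mul]
    congr 1
    exact (Finset.mul_prod_erase Finset.univ lam (Finset.mem_univ i)).symm
  push_cast at hL ⊢
  rw [hL]
  have : (lam i : ℚ) ≠ 0 := Nat.cast_ne_zero.mpr (hlam i).ne'
  field_simp

lemma congr_of_vwt_eq (hlam : ∀ i, 0 < lam i)
    (hcop : ∀ i j, i ≠ j → Nat.Coprime (lam i) (lam j))
    {c d : Fin n →₀ ℕ} (h : vwt lam c = vwt lam d) (k : Fin n) :
    c k ≡ d k [MOD lam k] := by
  classical
  -- natural number identity
  have hnat : (∑ i, c i * ∏ j ∈ Finset.univ.erase i, lam j) =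
      (∑ i, d i * ∏ j ∈ Finset.univ.erase i, lam j) := by
    have h1 := vwt_eq_sum_prod lam hlam c
    have h2 := vwt_eq_sum_prod lam hlam d
    rw [h] at h1
    exact_mod_cast h1.trans h2.symm
  haveI : NeZero (lam k) := ⟨(hlam k).ne'⟩
  -- pass to ZMod (lam k)
  have hzmod : ((∑ i, c i * ∏ j ∈ Finset.univ.erase i, lam j : ℕ) : ZMod (lam k)) =
      ((∑ i, d i * ∏ j ∈ Finset.univ.erase i, lam j : ℕ) : ZMod (lam k)) := by
    rw [hnat]
  have hvanish : ∀ (e : Fin n →₀ ℕ),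
      ((∑ i, e i * ∏ j ∈ Finset.univ.erase i, lam j : ℕ) : ZMod (lam k)) =
        (e k : ZMod (lam k)) * ((∏ j ∈ Finset.univ.erase k, lam j : ℕ) : ZMod (lam k)) := by
    intro e
    push_cast
    rw [Finset.sum_eq_single k]
    · intro i _ hik
      have hdvd : lam k ∣ ∏ j ∈ Finset.univ.erase i, lam j :=
        Finset.dvd_prod_of_mem lam (Finset.mem_erase.mpr ⟨Ne.symm hik, Finset.mem_univ k⟩)
      obtain ⟨t, ht⟩ := hdvd
      have : ((∏ j ∈ Finset.univ.erase i, lam j : ℕ) : ZMod (lam k)) = 0 := by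
        rw [ht]; push_cast; rw [ZMod.natCast_self]; ring
      push_cast at this
      rw [this, mul_zero]
    · intro hk; exact absurd (Finset.mem_univ k) hk
  rw [hvanish, hvanish] at hzmod
  have hcopr : Nat.Coprime (∏ j ∈ Finset.univ.erase k, lam j) (lam k) :=
    Nat.Coprime.prod_left fun j hj => hcop j k (Finset.mem_erase.mp hj).1
  have hunit : IsUnit ((∏ j ∈ Finset.univ.erase k, lam j : ℕ) : ZMod (lam k)) :=
    (ZMod.isUnit_iff_coprime _ _).mpr hcopr
  have := hunit.mul_right_cancel hzmod
  exact (ZMod.natCast_eq_natCast_iff _ _ _).mp this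

lemma vwt_mono {a b : Fin n →₀ ℕ} (h : a ≤ b) : vwt lam a ≤ vwt lam b := by
  have hab : a + (b - a) = b := add_tsub_cancel_of_le h
  calc vwt lam a ≤ vwt lam a + vwt lam (b - a) := le_add_of_nonneg_right (vwt_nonneg lam _)
    _ = vwt lam b := by rw [← vwt_add, hab]

lemma vwt_eq_zero_iff (hlam : ∀ i, 0 < lam i) {a : Fin n →₀ ℕ} (h : vwt lam a = 0) : a = 0 := by
  have hterm : ∀ i ∈ Finset.univ, ((a i : ℚ) / (lam i : ℚ)) = 0 := by
    rw [← Finset.sum_eq_zero_iff_of_nonneg]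
    · exact h
    · intro i _
      positivity
  ext i
  have := hterm i (Finset.mem_univ i)
  rcases div_eq_zero_iff.mp this with h0 | h0
  · simpa using h0
  · exact absurd h0 (Nat.cast_ne_zero.mpr (hlam i).ne')

lemma modeq_sum {ι : Type*} (s : Finset ι) (f g : ι → ℕ) (t : ℕ)
    (h : ∀ j ∈ s, f j ≡ g j [MOD t]) : (∑ j ∈ s, f j) ≡ (∑ j ∈ s, g j) [MOD t] := by
  classical
  induction s using Finset.induction_on with
  | empty => rfl
  | @insert a s' hne ih =>
      rw [Finset.sum_insert hne, Finset.sum_insert hne]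
      exact Nat.ModEq.add (h a (Finset.mem_insert_self a s'))
        (ih fun j hj => h j (Finset.mem_insert_of_mem hj))

lemma decomp_of_quasinormal (hlam : ∀ i, 0 < lam i)
    (hcop : ∀ i j, i ≠ j → Nat.Coprime (lam i) (lam j))
    (Λ : AddSubmonoid ℚ)
    (hΛ : Λ = AddSubmonoid.closure (Set.range fun i => (1 : ℚ) / (lam i : ℚ)))
    (hq : Quasinormal Λ) :
    ∀ m : ℕ, 1 ≤ m → ∀ a : Fin n →₀ ℕ, (m : ℚ) ≤ vwt lam a →
      ∃ b : Fin m → (Fin n →₀ ℕ), (∀ j, 1 ≤ vwt lam (b j)) ∧ ∑ j, b j = a := by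
  intro m hm
  induction m, hm using Nat.le_induction with
  | base =>
      intro a ha
      refine ⟨fun _ => a, fun j => by exact_mod_cast ha, ?_⟩
      simp
  | succ m hm ih =>
      intro a ha
      by_cases hA : ∃ i, lam i ≤ a i
      · obtain ⟨i, hi⟩ := hA
        set s := Finsupp.single i (lam i) with hs_def
        have hs : s ≤ a := Finsupp.single_le_iff.mpr hi
        have hadd : s + (a - s) = a := add_tsub_cancel_of_le hs
        have hvs : vwt lam s = 1 := by
          rw [hs_def, vwt_single, div_self (Nat.cast_ne_zero.mpr (hlam i).ne')]
        have hva' : vwt lam (a - s) = vwt lam a - 1 := by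
          have := vwt_add lam s (a - s)
          rw [hadd, hvs] at this
          linarith
        have hge : (m : ℚ) ≤ vwt lam (a - s) := by
          rw [hva']
          push_cast at ha
          linarith
        obtain ⟨b', hb', hsum'⟩ := ih (a - s) hge
        refine ⟨Fin.cons s b', ?_, ?_⟩
        · intro j
          refine Fin.cases ?_ ?_ j
          · rw [Fin.cons_zero, hvs]
          · intro j'; rw [Fin.cons_succ]; exact hb' j'
        · rw [Fin.sum_cons, hsum', hadd]
      · push_neg at hA
        have hx : vwt lam a ∈ Λ := (mem_Lambda lam Λ hΛ _).mpr ⟨a, rfl⟩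
        obtain ⟨y, hy, hysum⟩ := hq _ hx (m + 1) (by omega) (by exact_mod_cast ha)
        choose c hc using fun j => (mem_Lambda lam Λ hΛ (y j)).mp (hy j).1
        set r : Fin (m + 1) → (Fin n →₀ ℕ) :=
          fun j => Finsupp.equivFunOnFinite.symm (fun i => c j i % lam i) with hr_def
        have hr_apply : ∀ j i, r j i = c j i % lam i := by
          intro j i
          rw [hr_def]
          exact Finsupp.equivFunOnFinite_symm_apply_apply _ _
        have hlamQ : ∀ i, (lam i : ℚ) ≠ 0 := fun i => Nat.cast_ne_zero.mpr (hlam i).ne'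
        -- split each c j into integer part and fractional part
        have hsplit : ∀ j, vwt lam (c j) =
            ((∑ i, c j i / lam i : ℕ) : ℚ) + vwt lam (r j) := by
          intro j
          rw [vwt, vwt]
          push_cast
          rw [← Finset.sum_add_distrib]
          refine Finset.sum_congr rfl fun i _ => ?_
          rw [hr_apply]
          have hm0 := Nat.div_add_mod (c j i) (lam i)
          have : ((lam i : ℚ)) * ((c j i / lam i : ℕ) : ℚ) + ((c j i % lam i : ℕ) : ℚ)
              = ((c j i : ℕ) : ℚ) := by exact_mod_cast congrArg (Nat.cast : ℕ → ℚ) hm0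
          have hrw : ((c j i : ℕ) : ℚ) =
              ((lam i : ℚ)) * ((c j i / lam i : ℕ) : ℚ) + ((c j i % lam i : ℕ) : ℚ) := this.symm
          rw [hrw, add_div, mul_div_cancel_left₀ _ (hlamQ i)]
        set ρ := ∑ j, r j with hρ_def
        have hvρ : vwt lam ρ = ∑ j, vwt lam (r j) := vwt_sum lam _ _
        set Q : ℚ := ∑ j, ((∑ i, c j i / lam i : ℕ) : ℚ) with hQ_def
        have hQ0 : 0 ≤ Q := Finset.sum_nonneg fun j _ => Nat.cast_nonneg _
        have hval : vwt lam a = Q + vwt lam ρ := by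
          rw [hysum, hvρ, hQ_def, ← Finset.sum_add_distrib]
          exact Finset.sum_congr rfl fun j _ => by rw [hc j, hsplit j]
        -- congruences
        have hsumc : vwt lam (∑ j, c j) = vwt lam a := by
          rw [vwt_sum, hysum]
          exact Finset.sum_congr rfl fun j _ => (hc j).symm
        have hcong : ∀ i, ρ i ≡ a i [MOD lam i] := by
          intro i
          have h1 : ρ i = ∑ j, r j i := by rw [hρ_def]; exact Finsupp.finset_sum_apply _ _ _
          have h2 : (∑ j, c j) i = ∑ j, c j i := Finsupp.finset_sum_apply _ _ _
          have h3 : (∑ j, (r j) i) ≡ (∑ j, c j i) [MOD lam i] := by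
            refine modeq_sum _ _ _ _ fun j _ => ?_
            rw [hr_apply]
            exact Nat.mod_modEq _ _
          have h4 := congr_of_vwt_eq lam hlam hcop hsumc i
          rw [h1]
          exact h3.trans (h2 ▸ h4)
        have hale : a ≤ ρ := by
          rw [Finsupp.le_def]
          intro i
          have := (hcong i).symm
          have hmod : a i % lam i = ρ i % lam i := this
          rw [Nat.mod_eq_of_lt (hA i)] at hmod
          calc a i = ρ i % lam i := hmod
            _ ≤ ρ i := Nat.mod_le _ _
        have h1 : vwt lam a ≤ vwt lam ρ := vwt_mono lam hale
        have hQzero : Q = 0 := le_antisymm (by linarith) hQ0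
        have hvρa : vwt lam ρ = vwt lam a := by linarith
        -- ρ = a
        have hρa : ρ = a := by
          have hsub : a + (ρ - a) = ρ := add_tsub_cancel_of_le hale
          have : vwt lam (ρ - a) = 0 := by
            have := vwt_add lam a (ρ - a)
            rw [hsub, hvρa] at this
            linarith
          have := vwt_eq_zero_iff lam hlam this
          rw [← hsub, this, add_zero]
        -- each q j = 0, so y j = vwt (r j)
        have hqj : ∀ j, ((∑ i, c j i / lam i : ℕ) : ℚ) = 0 := by
          have := (Finset.sum_eq_zero_iff_of_nonneg
            (fun j (_ : j ∈ Finset.univ) => (Nat.cast_nonneg (∑ i, c j i / lam i) : (0:ℚ) ≤ _))).mp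
            hQzero
          exact fun j => this j (Finset.mem_univ j)
        refine ⟨r, fun j => ?_, hρa⟩
        have := hsplit j
        rw [hqj j, zero_add] at this
        rw [← this, ← hc j]
        exact (hy j).2

lemma values_decomp {p : ℕ} (hp : 0 < p) {a : Fin n →₀ ℕ}
    {b : Fin p → (Fin n →₀ ℕ)} (hb : ∀ j, 1 ≤ vwt lam (b j)) (hsum : ∑ j, b j ≤ a) :
    ∃ y : Fin p → ℚ, (∀ j, (∃ e : Fin n →₀ ℕ, y j = vwt lam e) ∧ 1 ≤ y j) ∧
      vwt lam a = ∑ j, y j := by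
  classical
  set j0 : Fin p := ⟨0, hp⟩
  set b' : Fin p → (Fin n →₀ ℕ) := Function.update b j0 (b j0 + (a - ∑ j, b j)) with hb'_def
  have hb'j0 : b' j0 = b j0 + (a - ∑ j, b j) := by
    rw [hb'_def]; exact Function.update_self _ _ _
  have hb'ne : ∀ j, j ≠ j0 → b' j = b j := by
    intro j hj
    rw [hb'_def]; exact Function.update_of_ne hj _ _
  have hsum' : ∑ j, b' j = a := by
    have he : Finset.univ \ {j0} = Finset.univ.erase j0 := by
      rw [Finset.sdiff_singleton_eq_erase]
    have h1 : ∑ j, b' j = b' j0 + ∑ x ∈ Finset.univ.erase j0, b' x := by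
      rw [Finset.add_sum_erase _ _ (Finset.mem_univ j0)]
    have h2 : ∑ x ∈ Finset.univ.erase j0, b' x = ∑ x ∈ Finset.univ.erase j0, b x := by
      refine Finset.sum_congr rfl fun x hx => hb'ne x (Finset.mem_erase.mp hx).1
    have h3 : b j0 + ∑ x ∈ Finset.univ.erase j0, b x = ∑ j, b j := by
      rw [Finset.add_sum_erase _ _ (Finset.mem_univ j0)]
    rw [h1, h2, hb'j0]
    calc b j0 + (a - ∑ j, b j) + ∑ x ∈ Finset.univ.erase j0, b x
        = (b j0 + ∑ x ∈ Finset.univ.erase j0, b x) + (a - ∑ j, b j) :=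
          add_right_comm _ _ _
      _ = (∑ j, b j) + (a - ∑ j, b j) := by rw [h3]
      _ = a := add_tsub_cancel_of_le hsum
  refine ⟨fun j => vwt lam (b' j), fun j => ⟨⟨b' j, rfl⟩, ?_⟩, ?_⟩
  · show 1 ≤ vwt lam (b' j)
    by_cases hj : j = j0
    · rw [hj, hb'j0]
      calc (1 : ℚ) ≤ vwt lam (b j0) := hb j0
        _ ≤ vwt lam (b j0 + (a - ∑ j', b j')) := vwt_mono lam le_self_add
    · rw [hb'ne j hj]
      exact hb j
  · show vwt lam a = ∑ j, vwt lam (b' j)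
    rw [← hsum', vwt_sum]


end Stmt11Aux

open Stmt11Aux MvPolynomial in
theorem stmt11 {K : Type*} [Field K] {n : ℕ} (lam : Fin n → ℕ) (hlam : ∀ i, 0 < lam i)
    (hcop : ∀ i j, i ≠ j → Nat.Coprime (lam i) (lam j))
    (Λ : AddSubmonoid ℚ)
    (hΛ : Λ = AddSubmonoid.closure (Set.range fun i => (1 : ℚ) / (lam i : ℚ))) :
    IsNormalIdeal (Ilam K lam) ↔ Quasinormal Λ := by
  classical
  have hIeq := Ilam_eq_Mq1 (K := K) lam hlam
  constructor
  · -- normal → quasinormal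
    intro hnorm x hx p hp hpx
    obtain ⟨a, rfl⟩ := (mem_Lambda lam Λ hΛ x).mp hx
    have hLpos := Lpos lam hlam
    have h1 : (MvPolynomial.monomial a (1 : K)) ^ (∏ i, lam i) ∈
        ((Jlam K lam) ^ p) ^ (∏ i, lam i) := by
      have := monomial_pow_mem (K := K) lam hlam hpx
      rwa [pow_mul] at this
    have h2 : ((Jlam K lam) ^ p) ^ (∏ i, lam i) ≤ ((Ilam K lam) ^ p) ^ (∏ i, lam i) :=
      Ideal.pow_right_mono (Ideal.pow_right_mono (Jlam_le_Ilam lam) p) _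
    have hint : IsIntegralOverIdeal ((Ilam K lam) ^ p) (MvPolynomial.monomial a (1 : K)) :=
      intOfPow hLpos (h2 h1)
    have hmem := hnorm p hp _ hint
    rw [hIeq] at hmem
    obtain ⟨b, hb, hsum⟩ := Dd_of_monomial_mem lam hmem
    obtain ⟨y, hy, hvala⟩ := values_decomp lam hp hb hsum
    refine ⟨y, fun j => ⟨?_, (hy j).2⟩, hvala⟩
    exact (mem_Lambda lam Λ hΛ (y j)).mpr (hy j).1
  · -- quasinormal → normal
    intro hq m hm f hf
    rw [hIeq] at hf ⊢
    have hle : (Mq lam 1 : Ideal (MvPolynomial (Fin n) K)) ^ m ≤ Mq lam ((m : ℚ)) := by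
      have := pow_le_Mq lam (le_refl (Mq lam 1 : Ideal (MvPolynomial (Fin n) K))) m
      rwa [mul_one] at this
    have hfm : f ∈ Mq lam ((m : ℚ)) := Mq_integrally_closed lam hle hf
    rw [← MvPolynomial.support_sum_monomial_coeff f]
    refine Ideal.sum_mem _ fun a ha => ?_
    have h1 : (MvPolynomial.monomial a (MvPolynomial.coeff a f)) =
        MvPolynomial.C (MvPolynomial.coeff a f) * MvPolynomial.monomial a 1 := by
      rw [MvPolynomial.C_mul_monomial, mul_one]
    rw [h1]
    refine Ideal.mul_mem_left _ _ ?_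
    obtain ⟨b, hb, hsum⟩ := decomp_of_quasinormal lam hlam hcop Λ hΛ hq m hm a
      (mem_Mq.mp hfm a ha)
    exact monomial_mem_Mq1_pow lam ⟨b, hb, le_of_eq hsum⟩
end
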